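/- arXiv:1802.02512 — 7 statements merged into one kernel-verified Lean document; each statement's English description precedes it below -/
import Mathlib

section
/- Suppose the reaction-rate function satisfies: k̄^r(c̃) = 0 whenever c̃_y < 0 for some y ∈ 𝒴 with γ^r_y < 0. Let (c,w) : [0,T] → ℝ^𝒴 × ℝ^ℛ be absolutely continuous with ẇ(t) ≥ 0 and ċ(t) = Γẇ(t) for a.e. t, with c(0) ≥ 0 componentwise and J(c,w) < ∞. Then c(t) ≥ 0 componentwise for all t ∈ [0,T]. -/
/-!
Where `c_y < 0`, every reaction `r` with `γʳ_y < 0` has rate `k̄ʳ(c) = 0`, and since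
`s(j|0) = ∞` for `j > 0`, finiteness of `J` forces `ẇʳ = 0` almost everywhere there. Hence
`ċ_y = Σ_r ẇʳ γʳ_y ≥ 0` almost everywhere on `{c_y < 0}`, so `c_y`, which starts nonnegative,
can never become negative.
-/

open MeasureTheory Filter Set ENNReal

/-- The Boltzmann entropy function `s(j|k)`, valued in `[0,∞]`. -/
noncomputable def bes (j k : ℝ) : ENNReal :=
  if j = 0 then ENNReal.ofReal k
  else if k = 0 then ⊤
  else ENNReal.ofReal (j * Real.log (j / k) - j + k)

lemma bes_zero_right_of_ne_zero {j : ℝ} (hj : j ≠ 0) : bes j 0 = ⊤ := by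
  simp [bes, hj]

section Lebesgue

variable {α : Type*} [MeasurableSpace α] {μ : Measure α}

lemma measure_eq_zero_of_lintegral_ne_top {f : α → ℝ≥0∞} {s : Set α}
    (hs : NullMeasurableSet s μ) (hf : ∀ᵐ x ∂μ, x ∈ s → f x = ⊤) (hint : ∫⁻ x, f x ∂μ ≠ ⊤) :
    μ s = 0 := by
  have hle : ⊤ * μ s ≤ ∫⁻ x, f x ∂μ := by
    rw [← lintegral_indicator_const₀ hs]
    refine lintegral_mono_ae (hf.mono fun x hx => ?_)
    by_cases h : x ∈ s
    · simp [h, hx h]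
    · simp [h]
  by_contra h
  exact hint (top_unique (ENNReal.top_mul h ▸ hle))

lemma ae_eq_zero_of_lintegral_bes_ne_top {j k : α → ℝ} (hj : AEMeasurable j μ)
    (hk : ∀ᵐ t ∂μ, k t = 0) (hJ : ∫⁻ t, bes (j t) (k t) ∂μ ≠ ⊤) : ∀ᵐ t ∂μ, j t = 0 := by
  have hnull : μ {t | j t ≠ 0} = 0 := by
    refine measure_eq_zero_of_lintegral_ne_top
      (hj.nullMeasurable (measurableSet_singleton 0).compl) ?_ hJ
    filter_upwards [hk] with t hkt hjt
    rw [hkt, bes_zero_right_of_ne_zero hjt]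
  simpa [ae_iff] using hnull

lemma ae_eq_zero_of_lintegral_sum_bes_ne_top {ι : Type*} [Fintype ι] {j k : α → ι → ℝ}
    (hj : AEMeasurable j μ) (hJ : ∫⁻ t, ∑ i, bes (j t i) (k t i) ∂μ ≠ ⊤) {i : ι}
    (hk : ∀ᵐ t ∂μ, k t i = 0) : ∀ᵐ t ∂μ, j t i = 0 :=
  ae_eq_zero_of_lintegral_bes_ne_top (hj.eval i) hk <| ne_top_of_le_ne_top hJ <|
    lintegral_mono fun t => Finset.single_le_sum (f := fun i => bes (j t i) (k t i))
      (fun _ _ => zero_le) (Finset.mem_univ i)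

end Lebesgue

section Primitive

variable {g g' : ℝ → ℝ} {a b : ℝ}

lemma continuousOn_of_eq_add_integral (hg' : IntegrableOn g' (Ioo a b))
    (hg : ∀ t ∈ Icc a b, g t = g a + ∫ s in a..t, g' s) : ContinuousOn g (Icc a b) := by
  refine (continuousOn_const (c := g a) |>.add (intervalIntegral.continuousOn_primitive
    (hg'.congr_set_ae Ioo_ae_eq_Icc.symm))).congr fun t ht => ?_
  rw [hg t ht, intervalIntegral.integral_of_le ht.1]
  rfl

lemma exists_last_nonneg_of_continuousOn (hg : ContinuousOn g (Icc a b)) (hab : a ≤ b)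
    (ha : 0 ≤ g a) : ∃ A ∈ Icc a b, 0 ≤ g A ∧ ∀ s ∈ Ioc A b, g s < 0 := by
  set S := Icc a b ∩ g ⁻¹' Ici 0
  have hS : IsClosed S := hg.preimage_isClosed_of_isClosed isClosed_Icc isClosed_Ici
  have haS : a ∈ S := ⟨left_mem_Icc.2 hab, ha⟩
  have hSbdd : BddAbove S := bddAbove_Icc.mono inter_subset_left
  obtain ⟨hA, hgA⟩ : sSup S ∈ S := hS.csSup_mem ⟨a, haS⟩ hSbdd
  refine ⟨sSup S, hA, hgA, fun s hs => not_le.1 fun hgs => ?_⟩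
  exact hs.1.not_ge (le_csSup hSbdd ⟨⟨hA.1.trans hs.1.le, hs.2⟩, hgs⟩)

/-- From the last time `A ≤ t` with `g A ≥ 0`, the function `g` can only increase. -/
theorem nonneg_of_eq_add_integral (hg' : IntegrableOn g' (Ioo a b))
    (hg : ∀ t ∈ Icc a b, g t = g a + ∫ s in a..t, g' s) (ha : 0 ≤ g a)
    (hg'_nonneg : ∀ᵐ s ∂volume.restrict (Ioo a b), g s < 0 → 0 ≤ g' s) :
    ∀ t ∈ Icc a b, 0 ≤ g t := by
  intro t ht
  obtain ⟨A, hA, hgA, hneg⟩ := exists_last_nonneg_of_continuousOn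
    ((continuousOn_of_eq_add_integral hg' hg).mono (Icc_subset_Icc_right ht.2)) ht.1 ha
  have hint : ∀ u v, a ≤ u → u ≤ v → v ≤ b → IntervalIntegrable g' volume u v :=
    fun u v hu huv hv => (intervalIntegrable_iff_integrableOn_Icc_of_le huv).2 <|
      (hg'.congr_set_ae Ioo_ae_eq_Icc.symm).mono_set (Icc_subset_Icc hu hv)
  have hgt : g t = g A + ∫ s in A..t, g' s := by
    rw [hg t ht, hg A ⟨hA.1, hA.2.trans ht.2⟩, add_assoc,
      intervalIntegral.integral_add_adjacent_intervals (hint a A le_rfl hA.1 (hA.2.trans ht.2))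
        (hint A t hA.1 hA.2 ht.2)]
  have hsub : Ioo A t ⊆ Ioo a b := Ioo_subset_Ioo hA.1 ht.2
  have hmono : 0 ≤ ∫ s in A..t, g' s := by
    refine intervalIntegral.integral_nonneg_of_ae_restrict hA.2 ?_
    rw [← Measure.restrict_congr_set Ioo_ae_eq_Icc]
    filter_upwards [ae_restrict_of_ae_restrict_of_subset hsub hg'_nonneg,
      ae_restrict_mem measurableSet_Ioo] with s hs hsA
    exact hs (hneg s (Ioo_subset_Ioc_self hsA))
  linarith

end Primitive

theorem stmt0_general
    {𝒴 ℛ : Type*} [Fintype 𝒴] [Fintype ℛ]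
    (T : ℝ)
    (γ : ℛ → 𝒴 → ℝ)
    (kbar : (𝒴 → ℝ) → ℛ → ℝ)
    (hk_zero : ∀ (c : 𝒴 → ℝ) (r : ℛ) (y : 𝒴), c y < 0 → γ r y < 0 → kbar c r = 0)
    (c : ℝ → 𝒴 → ℝ)
    (dc : ℝ → 𝒴 → ℝ) (dw : ℝ → ℛ → ℝ)
    (hdc_int : IntegrableOn dc (Set.Ioo 0 T))
    (hdw_int : IntegrableOn dw (Set.Ioo 0 T))
    (hc_AC : ∀ t ∈ Set.Icc (0:ℝ) T, c t = c 0 + ∫ s in (0:ℝ)..t, dc s)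
    (hdw_nonneg : ∀ᵐ t ∂(volume.restrict (Set.Ioo (0:ℝ) T)), ∀ r, 0 ≤ dw t r)
    (hcont_eq : ∀ᵐ t ∂(volume.restrict (Set.Ioo (0:ℝ) T)),
      dc t = fun y => ∑ r, dw t r * γ r y)
    (hc0 : ∀ y, 0 ≤ c 0 y)
    (hJ : (∫⁻ t in Set.Ioo (0:ℝ) T, ∑ r, bes (dw t r) (kbar (c t) r)) < ⊤) :
    ∀ t ∈ Set.Icc (0:ℝ) T, ∀ y, 0 ≤ c t y := by
  intro t ht y
  have hdcy : IntegrableOn (fun s => dc s y) (Ioo 0 T) := hdc_int.eval y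
  have hcy : ∀ t ∈ Icc 0 T, c t y = c 0 y + ∫ s in 0..t, dc s y := fun t ht => by
    have hint : IntegrableOn dc (Ioc 0 t) :=
      (hdc_int.congr_set_ae Ioo_ae_eq_Icc.symm).mono_set (Ioc_subset_Icc_self.trans
        (Icc_subset_Icc_right ht.2))
    rw [hc_AC t ht, Pi.add_apply, intervalIntegral.integral_of_le ht.1,
      intervalIntegral.integral_of_le ht.1, eval_integral hint.eval]
  refine nonneg_of_eq_add_integral hdcy hcy (hc0 y) ?_ t ht
  set μ := volume.restrict (Ioo (0 : ℝ) T)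
  have hneg_meas : NullMeasurableSet {s | c s y < 0} μ :=
    nullMeasurableSet_lt (((continuousOn_of_eq_add_integral hdcy hcy).aemeasurable
      measurableSet_Icc).mono_measure (Measure.restrict_mono Ioo_subset_Icc_self le_rfl))
      aemeasurable_const
  have hflux : ∀ r, γ r y < 0 → ∀ᵐ s ∂μ.restrict {s | c s y < 0}, dw s r = 0 := fun r hr =>
    ae_eq_zero_of_lintegral_sum_bes_ne_top hdw_int.aemeasurable.restrict
      (ne_top_of_le_ne_top hJ.ne (lintegral_mono' Measure.restrict_le_self le_rfl))
      ((ae_restrict_mem₀ hneg_meas).mono fun s hs => hk_zero _ r y hs hr)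
  refine (ae_restrict_iff'₀ hneg_meas).1 ?_
  filter_upwards [ae_all_iff.2 fun r => eventually_imp_distrib_left.2 (hflux r),
    ae_restrict_of_ae hdw_nonneg, ae_restrict_of_ae hcont_eq] with s hflux_s hdw hdc
  rw [hdc]
  refine Finset.sum_nonneg fun r _ => ?_
  rcases lt_or_ge (γ r y) 0 with hr | hr
  · rw [hflux_s r hr, zero_mul]
  · exact mul_nonneg (hdw r) hr

/-- if the reaction rates `k̄ʳ` vanish whenever some species `y` with
`γʳ_y < 0` has negative concentration, then any absolutely continuous pair `(c,w)` with
`ẇ ≥ 0`, `ċ = Γẇ`, nonnegative initial concentration, and finite rate functional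
`J(c,w) < ∞` keeps nonnegative concentrations on all of `[0,T]`. -/
theorem stmt0
    {𝒴 ℛ : Type*} [Fintype 𝒴] [Fintype ℛ]
    (T : ℝ) (hT : 0 < T)
    (γ : ℛ → 𝒴 → ℝ)
    (kbar : (𝒴 → ℝ) → ℛ → ℝ)
    (hk_nonneg : ∀ c : 𝒴 → ℝ, (∀ y, 0 ≤ c y) → ∀ r, 0 ≤ kbar c r)
    (hk_zero : ∀ (c : 𝒴 → ℝ) (r : ℛ) (y : 𝒴), c y < 0 → γ r y < 0 → kbar c r = 0)
    (c : ℝ → 𝒴 → ℝ) (w : ℝ → ℛ → ℝ)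
    (dc : ℝ → 𝒴 → ℝ) (dw : ℝ → ℛ → ℝ)
    (hdc_int : IntegrableOn dc (Set.Ioo 0 T))
    (hdw_int : IntegrableOn dw (Set.Ioo 0 T))
    (hc_AC : ∀ t ∈ Set.Icc (0:ℝ) T, c t = c 0 + ∫ s in (0:ℝ)..t, dc s)
    (hw_AC : ∀ t ∈ Set.Icc (0:ℝ) T, w t = w 0 + ∫ s in (0:ℝ)..t, dw s)
    (hdw_nonneg : ∀ᵐ t ∂(volume.restrict (Set.Ioo (0:ℝ) T)), ∀ r, 0 ≤ dw t r)
    (hcont_eq : ∀ᵐ t ∂(volume.restrict (Set.Ioo (0:ℝ) T)),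
      dc t = fun y => ∑ r, dw t r * γ r y)
    (hc0 : ∀ y, 0 ≤ c 0 y)
    (hJ : (∫⁻ t in Set.Ioo (0:ℝ) T, ∑ r, bes (dw t r) (kbar (c t) r)) < ⊤) :
    ∀ t ∈ Set.Icc (0:ℝ) T, ∀ y, 0 ≤ c t y :=
  stmt0_general T γ kbar hk_zero c dc dw hdc_int hdw_int hc_AC hdw_nonneg hcont_eq hc0 hJ
end

section
/- Let k̄ be continuous, let μ = (μ^r)_{r∈ℛ} be a finite ℝ^ℛ-valued Borel (vector) measure on (0,T), let c(0) ∈ ℝ^𝒴_+, and define w(t) := μ((0,t]) and c(t) := c(0) + Γw(t); assume c(t) ∈ ℝ^𝒴_+ and w(t) ∈ ℝ^ℛ_+ for all t ∈ [0,T]. If sup over ζ ∈ C^1_c((0,T); ℝ^ℛ) of [∫_{(0,T)} ζ(t) · μ(dt) − ∫_0^T H(c(t), ζ(t)) dt] is finite, then every component μ^r is a nonnegative measure that is absolutely continuous with respect to Lebesgue measure; consequently (c,w) admits a representative in W^{1,1}((0,T); ℝ^𝒴 × ℝ^ℛ) with ẇ ∈ L^1((0,T); ℝ^ℛ_+). 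-/
/-!
Testing with `ζ = -l f` for a bump `0 ≤ f ≤ 1` makes the `H`-term nonpositive, so
`l (∫ f dμ⁻ - ∫ f dμ⁺) ≤ M` for every `l > 0`. By inner and outer regularity this gives
`μ⁻ ≤ μ⁺` on subsets of `(0,T)`, and since the Jordan parts are mutually singular, `μ⁻ = 0`.
Then `w` is bounded, hence `k̄(c(t)) ≤ B` on `(0,T)`. Testing with `ζ = l f` for a bump `f`
that equals `1` on a compact `K` and is supported in an open set of Lebesgue measure `≤ e^{-l}`
gives `l μ(K) ≤ M + B`, so `μ` charges no Lebesgue-null set as `l → ∞`; `ẇ` is the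
Radon–Nikodym density of `μ`.
-/

open MeasureTheory Real Set

/-- Integration of a function against a finite signed measure, via its Jordan
decomposition. -/
noncomputable def sintegral (μ : MeasureTheory.SignedMeasure ℝ) (f : ℝ → ℝ) : ℝ :=
  (∫ t, f t ∂μ.toJordanDecomposition.posPart)
    - ∫ t, f t ∂μ.toJordanDecomposition.negPart

theorem nonpos_of_forall_pos_mul_le {x C : ℝ} (h : ∀ l : ℝ, 0 < l → l * x ≤ C) : x ≤ 0 := by
  by_contra! hx
  have := h ((|C| + 1) / x) (by positivity)
  rw [div_mul_cancel₀ _ hx.ne'] at this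
  linarith [le_abs_self C]

theorem ContinuousOn.exists_forall_apply_le {X Y ι : Type*} [TopologicalSpace X]
    [TopologicalSpace Y] [Fintype ι] {f : Y → ι → ℝ} {S : Set Y} (hf : ContinuousOn f S)
    (hS : IsClosed S) {φ : X → Y} (hφ : Continuous φ) {K : Set X} (hK : IsCompact K) :
    ∃ B, 0 ≤ B ∧ ∀ x ∈ K, φ x ∈ S → ∀ i, f (φ x) i ≤ B := by
  obtain ⟨B, hB⟩ := ((hK.image hφ).inter_right hS).exists_bound_of_continuousOn
    (hf.mono inter_subset_right)
  refine ⟨max B 0, le_max_right B 0, fun x hx hxS i => ?_⟩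
  calc f (φ x) i ≤ ‖f (φ x)‖ := (le_abs_self _).trans (norm_le_pi_norm (f (φ x)) i)
    _ ≤ max B 0 := le_max_of_le_left (hB _ ⟨mem_image_of_mem φ hx, hxS⟩)

structure IsTestFunction {E : Type*} [NormedAddCommGroup E] [NormedSpace ℝ E]
    (V : Set ℝ) (g : ℝ → E) : Prop where
  contDiff : ContDiff ℝ 1 g
  hasCompactSupport : HasCompactSupport g
  tsupport_subset : tsupport g ⊆ V

structure IsBump (V : Set ℝ) (f : ℝ → ℝ) : Prop extends IsTestFunction V f where
  mem_Icc : ∀ x, f x ∈ Icc (0 : ℝ) 1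

namespace IsTestFunction

variable {V : Set ℝ}

theorem const_mul {g : ℝ → ℝ} (hg : IsTestFunction V g) (a : ℝ) :
    IsTestFunction V (fun t => a * g t) where
  contDiff := contDiff_const.mul hg.contDiff
  hasCompactSupport := hg.hasCompactSupport.mul_left
  tsupport_subset := (tsupport_mul_subset_right).trans hg.tsupport_subset

theorem pi_single {ι : Type*} [Fintype ι] [DecidableEq ι] {g : ℝ → ℝ}
    (hg : IsTestFunction V g) (i : ι) :
    IsTestFunction V (fun t => Pi.single (M := fun _ : ι => ℝ) i (g t)) := by
  have hsupp : Function.support (fun t => Pi.single (M := fun _ : ι => ℝ) i (g t)) =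
      Function.support g := by
    ext t; simp [Pi.single_eq_zero_iff]
  refine ⟨?_, ?_, ?_⟩
  · exact (ContinuousLinearMap.single ℝ (fun _ : ι => ℝ) i).contDiff.comp hg.contDiff
  · exact hg.hasCompactSupport.comp_left (Pi.single_zero i)
  · rw [tsupport, hsupp]; exact hg.tsupport_subset

theorem sub_setIntegral_exp_le_of_pi {ι : Type*} [Fintype ι] {F : ι → (ℝ → ℝ) → ℝ}
    (hF : ∀ i, F i (fun _ => 0) = 0) {k : ℝ → ι → ℝ} {M : ℝ}
    (h : ∀ ζ : ℝ → ι → ℝ, IsTestFunction V ζ →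
      ∑ i, F i (fun t => ζ t i) - ∫ t in V, ∑ i, k t i * (exp (ζ t i) - 1) ≤ M)
    {g : ℝ → ℝ} (hg : IsTestFunction V g) (i : ι) :
    F i g - ∫ t in V, k t i * (exp (g t) - 1) ≤ M := by
  classical
  have hk : ∀ t, ∑ j, k t j * (exp (Pi.single (M := fun _ => ℝ) i (g t) j) - 1)
      = k t i * (exp (g t) - 1) := fun t => by
    rw [Fintype.sum_eq_single i fun j hj => by simp [hj]]; simp
  have := h _ (hg.pi_single i)
  rw [Fintype.sum_eq_single i fun j hj => by simp [hj, hF]] at this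
  simpa only [hk, Pi.single_eq_same] using this

end IsTestFunction

open scoped Manifold in
theorem exists_isBump_eqOn_one {K U : Set ℝ} (hK : IsCompact K) (hU : IsOpen U) (hKU : K ⊆ U) :
    ∃ f, IsBump U f ∧ EqOn f 1 K := by
  obtain ⟨L, hL, hKL, hLU⟩ := exists_compact_between hK hU hKU
  obtain ⟨f, hf0, hf1, hf01⟩ := exists_contMDiffMap_zero_one_of_isClosed 𝓘(ℝ, ℝ)
    (n := (⊤ : ℕ∞)) isOpen_interior.isClosed_compl hK.isClosed (disjoint_compl_left_iff.2 hKL)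
  have hts : tsupport f ⊆ L :=
    closure_minimal (fun x hx => interior_subset (not_not.1 fun h => hx (hf0 h))) hL.isClosed
  refine ⟨f, ⟨⟨?_, hL.of_isClosed_subset (isClosed_tsupport _) hts, hts.trans hLU⟩, hf01⟩, hf1⟩
  exact (contMDiff_iff_contDiff.mp f.contMDiff).of_le (by exact_mod_cast le_top)

namespace IsBump

variable {U : Set ℝ} {f : ℝ → ℝ} (ν : Measure ℝ) [IsFiniteMeasure ν]

theorem mono (hf : IsBump U f) {V : Set ℝ} (hUV : U ⊆ V) : IsBump V f :=
  ⟨⟨hf.contDiff, hf.hasCompactSupport, hf.tsupport_subset.trans hUV⟩, hf.mem_Icc⟩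

theorem integrable (hf : IsBump U f) : Integrable f ν :=
  hf.contDiff.continuous.integrable_of_hasCompactSupport hf.hasCompactSupport

theorem measureReal_le_integral (hf : IsBump U f) {K : Set ℝ} (hK : MeasurableSet K)
    (hfK : EqOn f 1 K) : ν.real K ≤ ∫ t, f t ∂ν := by
  calc ν.real K = ∫ t in K, f t ∂ν := by simp [setIntegral_congr_fun hK hfK]
    _ ≤ ∫ t, f t ∂ν :=
      setIntegral_le_integral (hf.integrable ν) (.of_forall fun x => (hf.mem_Icc x).1)

theorem integral_le_measureReal (hf : IsBump U f) (hU : MeasurableSet U) :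
    ∫ t, f t ∂ν ≤ ν.real U := by
  rw [← setIntegral_eq_integral_of_forall_compl_eq_zero
    fun x hx => image_eq_zero_of_notMem_tsupport fun h => hx (hf.tsupport_subset h)]
  calc ∫ t in U, f t ∂ν ≤ ∫ _ in U, (1 : ℝ) ∂ν :=
        setIntegral_mono_on (hf.integrable ν).integrableOn
          (integrableOn_const (measure_ne_top _ _)) hU fun x _ => (hf.mem_Icc x).2
    _ = ν.real U := by simp

theorem setIntegral_mul_exp_sub_one_le {V : Set ℝ} (hf : IsBump U f)
    (hU : MeasurableSet U) (hUfin : volume U ≠ ⊤) (hV : MeasurableSet V) {k : ℝ → ℝ} {B : ℝ}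
    (hB : 0 ≤ B) (hk : ∀ t ∈ V, k t ∈ Icc 0 B) {l : ℝ} (hl : 0 ≤ l) :
    ∫ t in V, k t * (exp (l * f t) - 1) ≤ B * exp l * volume.real U := by
  have hlf : ∀ t, l * f t ∈ Icc 0 l := fun t =>
    ⟨mul_nonneg hl (hf.mem_Icc t).1, mul_le_of_le_one_right hl (hf.mem_Icc t).2⟩
  calc ∫ t in V, k t * (exp (l * f t) - 1)
      ≤ ∫ t in V, U.indicator (fun _ => B * exp l) t := by
        refine integral_mono_of_nonneg ?_ ?_ ?_
        · filter_upwards [ae_restrict_mem hV] with t ht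
          exact mul_nonneg (hk t ht).1 (sub_nonneg.2 (one_le_exp (hlf t).1))
        · exact (integrable_indicator_iff hU).2
            (integrableOn_const ((Measure.restrict_apply_le _ _).trans_lt hUfin.lt_top).ne)
        · filter_upwards [ae_restrict_mem hV] with t ht
          by_cases htU : t ∈ U
          · rw [indicator_of_mem htU]
            refine mul_le_mul (hk t ht).2 ?_ (sub_nonneg.2 (one_le_exp (hlf t).1)) hB
            linarith [exp_le_exp.2 (hlf t).2]
          · rw [indicator_of_notMem htU,
              image_eq_zero_of_notMem_tsupport fun h => htU (hf.tsupport_subset h)]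
            simp
    _ = B * exp l * (volume.restrict V).real U := by
        rw [integral_indicator_const _ hU, smul_eq_mul, mul_comm]
    _ ≤ B * exp l * volume.real U := by
        gcongr
        exact ENNReal.toReal_mono hUfin (Measure.restrict_apply_le _ _)

end IsBump

theorem exists_isBump_measureReal_le_integral_add (ν : Measure ℝ) [IsFiniteMeasure ν]
    {A U : Set ℝ} (hA : MeasurableSet A) (hU : IsOpen U) (hAU : A ⊆ U) {ε : ℝ} (hε : 0 < ε) :
    ∃ f, IsBump U f ∧ ν.real A ≤ ∫ t, f t ∂ν + ε := by
  obtain ⟨K, hKA, hK, hAK⟩ := hA.exists_isCompact_lt_add (measure_ne_top ν A)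
    (ENNReal.ofReal_pos.2 hε).ne'
  obtain ⟨f, hf, hfK⟩ := exists_isBump_eqOn_one hK hU (hKA.trans hAU)
  refine ⟨f, hf, ?_⟩
  have hAK' : ν.real A ≤ ν.real K + ε := by
    simpa [measureReal_def, hε.le] using
      ENNReal.toReal_le_add hAK.le (measure_ne_top _ _) ENNReal.ofReal_ne_top
  linarith [hf.measureReal_le_integral ν hK.measurableSet hfK]

theorem measureReal_le_of_forall_isBump_integral_le {P N : Measure ℝ} [IsFiniteMeasure P]
    [IsFiniteMeasure N] {V : Set ℝ} (hV : IsOpen V)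
    (h : ∀ f, IsBump V f → ∫ t, f t ∂N ≤ ∫ t, f t ∂P)
    {A : Set ℝ} (hA : MeasurableSet A) (hAV : A ⊆ V) : N.real A ≤ P.real A := by
  refine le_of_forall_pos_le_add fun ε hε => ?_
  obtain ⟨U, hAU, hU, hPU⟩ := A.exists_isOpen_lt_of_lt (μ := P) (P A + ENNReal.ofReal (ε / 2))
    (ENNReal.lt_add_right (measure_ne_top _ _) (by simpa using hε))
  obtain ⟨f, hf, hNf⟩ := exists_isBump_measureReal_le_integral_add N hA (hU.inter hV)
    (subset_inter hAU hAV) (half_pos hε)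
  have hPU' : P.real (U ∩ V) ≤ P.real A + ε / 2 := by
    simpa [measureReal_def, (half_pos hε).le] using ENNReal.toReal_le_add
      ((measure_mono (inter_subset_left : U ∩ V ⊆ U)).trans hPU.le) (measure_ne_top _ _)
      ENNReal.ofReal_ne_top
  linarith [h f (hf.mono inter_subset_right),
    hf.integral_le_measureReal P (hU.inter hV).measurableSet]

namespace MeasureTheory.SignedMeasure

theorem negPart_apply_eq_zero (s : SignedMeasure ℝ) {B : Set ℝ} (hB : MeasurableSet B)
    (h : ∀ A ⊆ B, MeasurableSet A → s A = 0) : s.toJordanDecomposition.negPart B = 0 := by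
  obtain ⟨i, hi, -, hi₃, -, hneg⟩ := s.toJordanDecomposition_spec
  rw [hneg, toMeasureOfLEZero_apply _ hi₃ hi.compl hB]
  simp [h _ inter_subset_right (hi.compl.inter hB)]

theorem eq_toSignedMeasure_posPart (s : SignedMeasure ℝ)
    (h : s.toJordanDecomposition.negPart = 0) :
    s = s.toJordanDecomposition.posPart.toSignedMeasure := by
  ext A hA
  rw [apply_eq_posPart_real_sub_negPart_real s hA, h, Measure.toSignedMeasure_apply_measurable hA]
  simp

end MeasureTheory.SignedMeasure

namespace MeasureTheory

theorem SignedMeasure.negPart_eq_zero_of_sintegral_sub_exp_le (s : SignedMeasure ℝ) {V : Set ℝ}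
    (hV : IsOpen V) (hsV : ∀ A, MeasurableSet A → A ∩ V = ∅ → s A = 0) {k : ℝ → ℝ}
    (hk : ∀ t ∈ V, 0 ≤ k t) {M : ℝ}
    (h : ∀ g, IsTestFunction V g → sintegral s g - ∫ t in V, k t * (exp (g t) - 1) ≤ M) :
    s.toJordanDecomposition.negPart = 0 := by
  obtain ⟨i, hi, hPi, hNi⟩ := s.toJordanDecomposition.mutuallySingular
  set P := s.toJordanDecomposition.posPart
  set N := s.toJordanDecomposition.negPart
  have hbump : ∀ f, IsBump V f → ∫ t, f t ∂N ≤ ∫ t, f t ∂P := by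
    intro f hf
    rw [← sub_nonpos]
    refine nonpos_of_forall_pos_mul_le (C := M) fun l hl => ?_
    have hH : ∫ t in V, k t * (exp (-l * f t) - 1) ≤ 0 := by
      refine setIntegral_nonpos hV.measurableSet fun t ht =>
        mul_nonpos_of_nonneg_of_nonpos (hk t ht) (sub_nonpos.2 (exp_le_one_iff.2 ?_))
      nlinarith [(hf.mem_Icc t).1]
    calc l * (∫ t, f t ∂N - ∫ t, f t ∂P) = sintegral s (fun t => -l * f t) := by
          simp only [sintegral, integral_const_mul]; ring
      _ ≤ M := by linarith [h _ (hf.const_mul (-l))]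
  have hNV : N (i ∩ V) = 0 := by
    have := measureReal_le_of_forall_isBump_integral_le hV hbump (hi.inter hV.measurableSet)
      inter_subset_right
    have hP0 : P.real (i ∩ V) = 0 := by
      simp [measureReal_def, measure_mono_null inter_subset_left hPi]
    exact (measureReal_eq_zero_iff).1 ((this.trans hP0.le).antisymm measureReal_nonneg)
  have hNVc : N Vᶜ = 0 := s.negPart_apply_eq_zero hV.measurableSet.compl fun A hAV hA =>
    hsV A hA (disjoint_iff_inter_eq_empty.1 (subset_compl_iff_disjoint_right.1 hAV))
  refine Measure.measure_univ_eq_zero.1 (measure_mono_null (fun t _ => ?_)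
    (measure_union_null (measure_union_null hNV hNi) hNVc))
  by_cases t ∈ i <;> by_cases t ∈ V <;> simp_all

theorem Measure.absolutelyContinuous_of_integral_sub_exp_le (P : Measure ℝ) [IsFiniteMeasure P]
    {V : Set ℝ} (hV : IsOpen V) (hPV : P Vᶜ = 0) {k : ℝ → ℝ} {B M : ℝ} (hB : 0 ≤ B)
    (hk : ∀ t ∈ V, k t ∈ Icc 0 B)
    (h : ∀ g, IsTestFunction V g → ∫ t, g t ∂P - ∫ t in V, k t * (exp (g t) - 1) ≤ M) :
    P ≪ volume := by
  refine Measure.AbsolutelyContinuous.mk fun A hA hA0 => ?_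
  have hAV : P.real (A ∩ V) ≤ 0 := by
    refine le_of_forall_pos_le_add fun ε hε => ?_
    rw [zero_add, ← sub_nonpos]
    refine nonpos_of_forall_pos_mul_le (C := M + B) fun l hl => ?_
    obtain ⟨U, hAU, hU, hUl⟩ := (A ∩ V).exists_isOpen_lt_of_lt (μ := volume)
      (ENNReal.ofReal (exp (-l))) (by simp [measure_mono_null inter_subset_left hA0, exp_pos])
    obtain ⟨f, hf, hPf⟩ := exists_isBump_measureReal_le_integral_add P
      (hA.inter hV.measurableSet) (hU.inter hV) (subset_inter hAU inter_subset_right) hε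
    have hH := (hf.mono inter_subset_left).setIntegral_mul_exp_sub_one_le hU.measurableSet
      (hUl.trans ENNReal.ofReal_lt_top).ne hV.measurableSet hB hk hl.le
    have hvol : volume.real U ≤ exp (-l) := ENNReal.toReal_le_of_le_ofReal (exp_pos _).le hUl.le
    have hBU : B * exp l * volume.real U ≤ B := by
      calc B * exp l * volume.real U ≤ B * exp l * exp (-l) := by gcongr
        _ = B := by rw [mul_assoc, ← exp_add]; simp
    have hg := h _ ((hf.mono inter_subset_right).const_mul l)
    rw [integral_const_mul] at hg
    calc l * (P.real (A ∩ V) - ε) ≤ l * ∫ t, f t ∂P := by gcongr; linarith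
      _ ≤ M + B := by linarith
  have hAV0 : P (A ∩ V) = 0 := (measureReal_eq_zero_iff).1 (hAV.antisymm measureReal_nonneg)
  exact measure_mono_null (fun t ht => by by_cases t ∈ V <;> simp_all)
    (measure_union_null hAV0 hPV)

end MeasureTheory

theorem stmt1_general
    {𝒴 ℛ : Type*} [Fintype ℛ]
    (T : ℝ)
    (γ : ℛ → 𝒴 → ℝ)
    (kbar : (𝒴 → ℝ) → ℛ → ℝ)
    (hk_cont : ContinuousOn kbar {c : 𝒴 → ℝ | ∀ y, 0 ≤ c y})
    (hk_nonneg : ∀ c : 𝒴 → ℝ, (∀ y, 0 ≤ c y) → ∀ r, 0 ≤ kbar c r)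
    (μ : ℛ → MeasureTheory.SignedMeasure ℝ)
    (hμsupp : ∀ (r : ℛ) (A : Set ℝ), MeasurableSet A → A ∩ Set.Ioo 0 T = ∅ → μ r A = 0)
    (c0 : 𝒴 → ℝ)
    (w : ℝ → ℛ → ℝ) (hw : ∀ t r, w t r = μ r (Set.Ioc 0 t))
    (c : ℝ → 𝒴 → ℝ) (hc : ∀ t, c t = fun y => c0 y + ∑ r, w t r * γ r y)
    (hcpos : ∀ t ∈ Set.Icc (0:ℝ) T, ∀ y, 0 ≤ c t y)
    (M : ℝ)
    (hsup : ∀ ζ : ℝ → ℛ → ℝ, ContDiff ℝ 1 ζ → HasCompactSupport ζ →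
      tsupport ζ ⊆ Set.Ioo 0 T →
      (∑ r, sintegral (μ r) (fun t => ζ t r))
        - ∫ t in Set.Ioo (0:ℝ) T, ∑ r, kbar (c t) r * (Real.exp (ζ t r) - 1) ≤ M) :
    (∀ (r : ℛ) (A : Set ℝ), MeasurableSet A → 0 ≤ μ r A)
    ∧ (∀ (r : ℛ) (A : Set ℝ), MeasurableSet A → volume A = 0 → μ r A = 0)
    ∧ ∃ dw : ℝ → ℛ → ℝ, IntegrableOn dw (Set.Ioo 0 T)
        ∧ (∀ᵐ t ∂(volume.restrict (Set.Ioo (0:ℝ) T)), ∀ r, 0 ≤ dw t r)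
        ∧ ∀ t ∈ Set.Icc (0:ℝ) T, ∀ r, w t r = ∫ s in Set.Ioc (0:ℝ) t, dw s r := by
  have key : ∀ r g, IsTestFunction (Ioo 0 T) g →
      sintegral (μ r) g - ∫ t in Ioo 0 T, kbar (c t) r * (exp (g t) - 1) ≤ M :=
    fun r g hg => hg.sub_setIntegral_exp_le_of_pi (fun _ => by simp [sintegral])
      (fun ζ hζ => hsup ζ hζ.contDiff hζ.hasCompactSupport hζ.tsupport_subset) r
  have hN : ∀ r, (μ r).toJordanDecomposition.negPart = 0 := fun r =>
    (μ r).negPart_eq_zero_of_sintegral_sub_exp_le isOpen_Ioo (hμsupp r)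
      (fun t ht => hk_nonneg _ (hcpos t (Ioo_subset_Icc_self ht)) r) (key r)
  set P := fun r => (μ r).toJordanDecomposition.posPart
  have hμP : ∀ r A, MeasurableSet A → μ r A = (P r).real A := fun r A hA => by
    rw [(μ r).eq_toSignedMeasure_posPart (hN r), Measure.toSignedMeasure_apply_measurable hA]
  have hwP : ∀ t r, w t r = (P r).real (Ioc 0 t) := fun t r => by
    rw [hw, hμP r _ measurableSet_Ioc]
  obtain ⟨B, hB0, hB⟩ := hk_cont.exists_forall_apply_le isClosed_Ici
    (by fun_prop : Continuous fun (v : ℛ → ℝ) (y : 𝒴) => c0 y + ∑ r, v r * γ r y)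
    (isCompact_Icc (a := 0) (b := fun r => (P r).real univ))
  have hkB : ∀ t ∈ Ioo 0 T, ∀ r, kbar (c t) r ∈ Icc 0 B := fun t ht r => by
    have hct := hcpos t (Ioo_subset_Icc_self ht)
    have hwt : w t ∈ Icc 0 fun r => (P r).real univ :=
      ⟨fun r => (hwP t r).trans_ge measureReal_nonneg,
        fun r => (hwP t r).trans_le (measureReal_mono (subset_univ _))⟩
    exact ⟨hk_nonneg _ hct r, by simpa only [← hc] using hB (w t) hwt ((hc t) ▸ hct) r⟩
  have hPac : ∀ r, P r ≪ volume := fun r =>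
    (P r).absolutelyContinuous_of_integral_sub_exp_le isOpen_Ioo
      ((measureReal_eq_zero_iff).1 ((hμP r _ measurableSet_Ioo.compl).symm.trans
        (hμsupp r _ measurableSet_Ioo.compl (compl_inter_self _))))
      hB0 (fun t ht => hkB t ht r) fun g hg => by simpa [sintegral, hN r] using key r g hg
  refine ⟨fun r A hA => (hμP r A hA).trans_ge measureReal_nonneg,
    fun r A hA hA0 => by simp [hμP r A hA, measureReal_def, hPac r hA0],
    fun t r => ((P r).rnDeriv volume t).toReal,
    Integrable.of_eval fun r => Measure.integrable_toReal_rnDeriv.restrict,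
    .of_forall fun t r => ENNReal.toReal_nonneg, fun t _ r => ?_⟩
  rw [hwP]
  exact (Measure.setIntegral_toReal_rnDeriv (hPac r) _).symm

/-- let `k̄` be continuous, `μ` a finite `ℝ^ℛ`-valued Borel measure on
`(0,T)`, `w(t) := μ((0,t])`, `c(t) := c(0) + Γw(t)`, with `c(t) ≥ 0`, `w(t) ≥ 0`.
If `sup_{ζ ∈ C¹_c((0,T);ℝ^ℛ)} [∫ ζ·dμ − ∫ H(c(t),ζ(t)) dt] < ∞`, then each component
`μ^r` is nonnegative and absolutely continuous w.r.t. Lebesgue measure; consequently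
`(c,w)` has a `W^{1,1}` representative with derivative `ẇ ∈ L¹((0,T); ℝ^ℛ₊)`. -/
theorem stmt1
    {𝒴 ℛ : Type*} [Fintype 𝒴] [Fintype ℛ]
    (T : ℝ) (hT : 0 < T)
    (γ : ℛ → 𝒴 → ℝ)
    (kbar : (𝒴 → ℝ) → ℛ → ℝ)
    (hk_cont : ContinuousOn kbar {c : 𝒴 → ℝ | ∀ y, 0 ≤ c y})
    (hk_nonneg : ∀ c : 𝒴 → ℝ, (∀ y, 0 ≤ c y) → ∀ r, 0 ≤ kbar c r)
    (μ : ℛ → MeasureTheory.SignedMeasure ℝ)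
    (hμsupp : ∀ (r : ℛ) (A : Set ℝ), MeasurableSet A → A ∩ Set.Ioo 0 T = ∅ → μ r A = 0)
    (c0 : 𝒴 → ℝ) (hc0 : ∀ y, 0 ≤ c0 y)
    (w : ℝ → ℛ → ℝ) (hw : ∀ t r, w t r = μ r (Set.Ioc 0 t))
    (c : ℝ → 𝒴 → ℝ) (hc : ∀ t, c t = fun y => c0 y + ∑ r, w t r * γ r y)
    (hcpos : ∀ t ∈ Set.Icc (0:ℝ) T, ∀ y, 0 ≤ c t y)
    (hwpos : ∀ t ∈ Set.Icc (0:ℝ) T, ∀ r, 0 ≤ w t r)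
    (M : ℝ)
    (hsup : ∀ ζ : ℝ → ℛ → ℝ, ContDiff ℝ 1 ζ → HasCompactSupport ζ →
      tsupport ζ ⊆ Set.Ioo 0 T →
      (∑ r, sintegral (μ r) (fun t => ζ t r))
        - ∫ t in Set.Ioo (0:ℝ) T, ∑ r, kbar (c t) r * (Real.exp (ζ t r) - 1) ≤ M) :
    (∀ (r : ℛ) (A : Set ℝ), MeasurableSet A → 0 ≤ μ r A)
    ∧ (∀ (r : ℛ) (A : Set ℝ), MeasurableSet A → volume A = 0 → μ r A = 0)
    ∧ ∃ dw : ℝ → ℛ → ℝ, IntegrableOn dw (Set.Ioo 0 T)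
        ∧ (∀ᵐ t ∂(volume.restrict (Set.Ioo (0:ℝ) T)), ∀ r, 0 ≤ dw t r)
        ∧ ∀ t ∈ Set.Icc (0:ℝ) T, ∀ r, w t r = ∫ s in Set.Ioc (0:ℝ) t, dw s r :=
  stmt1_general T γ kbar hk_cont hk_nonneg μ hμsupp c0 w hw c hc hcpos M hsup
end

section
/- Let μ be a finite signed Borel measure on the interval (0,T) and let k : (0,T) → ℝ_{≥0} be Lebesgue-integrable. If sup over ζ ∈ C^1_c((0,T); ℝ) of [∫_{(0,T)} ζ dμ − ∫_0^T k(t)(e^{ζ(t)} − 1) dt] is finite, then μ is a nonnegative measure. -/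
/-!
For `ζ ≤ 0` the penalty `∫ k (e^ζ - 1)` is nonpositive, so the bound gives `∫ ζ dμ ≤ M`; scaling
`ζ = -c φ` with `c → ∞` yields `∫ φ dμ ≥ 0` for every nonnegative test function `φ` supported in
`(0,T)`. If the negative part `μ⁻` charged `(0,T)`, inner regularity would give a compact `K`
inside the Hahn-negative set with `μ⁻ K > 0 = μ⁺ K`, outer regularity an open `V ⊇ K` with
`μ⁺ V < μ⁻ K`, and a smooth bump equal to `1` on `K` and supported in `V` would have a negative
integral. Outside `(0,T)` the measure vanishes by assumption.
-/

open MeasureTheory Real Set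

open scoped Manifold

section

variable {E : Type*} [NormedAddCommGroup E] [NormedSpace ℝ E] [FiniteDimensional ℝ E]

theorem exists_contDiff_hasCompactSupport_eqOn_one {K U : Set E} (hK : IsCompact K)
    (hU : IsOpen U) (hKU : K ⊆ U) (n : ℕ∞) :
    ∃ φ : E → ℝ, ContDiff ℝ n φ ∧ HasCompactSupport φ ∧ tsupport φ ⊆ U ∧ EqOn φ 1 K ∧
      ∀ x, φ x ∈ Icc 0 1 := by
  obtain ⟨L, hL, hKL, hLU⟩ := exists_compact_between hK hU hKU
  obtain ⟨φ, hφ, hrange, hsupp, hone⟩ := exists_contMDiff_support_eq_eq_one_iff 𝓘(ℝ, E)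
    (n := n) isOpen_interior hK.isClosed hKL
  have htsupp : tsupport φ ⊆ L := by
    rw [tsupport, hsupp]; exact closure_minimal interior_subset hL.isClosed
  exact ⟨φ, contMDiff_iff_contDiff.mp hφ, hL.of_isClosed_subset (isClosed_tsupport φ) htsupp,
    htsupp.trans hLU, fun x hx => (hone x).mp hx, fun x => hrange (mem_range_self x)⟩

theorem exists_contDiff_integral_lt_integral [MeasurableSpace E] [BorelSpace E]
    (μ ν : Measure E) [IsFiniteMeasure μ] [IsFiniteMeasure ν] {U S : Set E} (hU : IsOpen U)
    (hS : MeasurableSet S) (hSU : S ⊆ U) (hμ : μ S = 0) (hν : ν S ≠ 0) (n : ℕ∞) :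
    ∃ φ : E → ℝ, ContDiff ℝ n φ ∧ HasCompactSupport φ ∧ tsupport φ ⊆ U ∧ (∀ x, 0 ≤ φ x) ∧
      ∫ x, φ x ∂μ < ∫ x, φ x ∂ν := by
  obtain ⟨K, hKS, hK, hKν⟩ := hS.exists_lt_isCompact (pos_iff_ne_zero.mpr hν)
  have hKμ : μ K = 0 := measure_mono_null hKS hμ
  obtain ⟨V, hKV, hV, hVμ⟩ := Set.exists_isOpen_lt_of_lt (μ := μ) K (ν K) (hKμ ▸ hKν)
  obtain ⟨φ, hφ, hcs, hts, hone, hφ01⟩ := exists_contDiff_hasCompactSupport_eqOn_one hK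
    (hV.inter hU) (subset_inter hKV (hKS.trans hSU)) n
  have hintμ : ENNReal.ofReal (∫ x, φ x ∂μ) ≤ μ V :=
    integral_le_measure (fun x _ => (hφ01 x).2) fun x hx =>
      (image_eq_zero_of_notMem_tsupport fun h => hx (hts h).1).le
  have hintν : ν K ≤ ENNReal.ofReal (∫ x, φ x ∂ν) :=
    (hφ.continuous.integrable_of_hasCompactSupport hcs).measure_le_integral
      (ae_of_all _ fun x => (hφ01 x).1) fun x hx => (hone hx).ge
  refine ⟨φ, hφ, hcs, hts.trans inter_subset_right, fun x => (hφ01 x).1, ?_⟩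
  exact (ENNReal.ofReal_lt_ofReal_iff'.mp (hintμ.trans_lt (hVμ.trans_le hintν))).1

end

theorem sintegral_const_mul (μ : SignedMeasure ℝ) (c : ℝ) (f : ℝ → ℝ) :
    sintegral μ (fun x => c * f x) = c * sintegral μ f := by
  simp only [sintegral, integral_const_mul, mul_sub]

theorem apply_nonneg_of_forall_sintegral_nonneg (μ : SignedMeasure ℝ) {U : Set ℝ}
    (hU : IsOpen U)
    (h : ∀ φ : ℝ → ℝ, ContDiff ℝ 1 φ → HasCompactSupport φ → tsupport φ ⊆ U →
      (∀ x, 0 ≤ φ x) → 0 ≤ sintegral μ φ)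
    {A : Set ℝ} (hA : MeasurableSet A) (hAU : A ⊆ U) : 0 ≤ μ A := by
  set j := μ.toJordanDecomposition
  obtain ⟨S, hS, hSpos, hScneg⟩ := j.mutuallySingular
  have hSU : j.negPart (S ∩ U) = 0 := by
    by_contra hne
    obtain ⟨φ, hφ, hcs, hts, hnn, hlt⟩ := exists_contDiff_integral_lt_integral j.posPart j.negPart
      hU (hS.inter hU.measurableSet) inter_subset_right (measure_mono_null inter_subset_left hSpos)
      hne 1
    exact (h φ hφ hcs hts hnn).not_gt (sub_neg.mpr hlt)
  have hAsub : A ⊆ (S ∩ U) ∪ Sᶜ := fun x hx => by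
    by_cases hxS : x ∈ S <;> simp [hxS, hAU hx]
  have hAneg : j.negPart A = 0 := measure_mono_null hAsub (measure_union_null hSU hScneg)
  rw [μ.apply_eq_posPart_real_sub_negPart_real hA, measureReal_def (μ := j.negPart), hAneg]
  simp

theorem nonneg_of_forall_pos_le_mul {a M : ℝ} (h : ∀ c : ℝ, 0 < c → M ≤ c * a) : 0 ≤ a := by
  by_contra! ha
  have := h ((|M| + 1) / -a) (div_pos (by positivity) (neg_pos.mpr ha))
  rw [div_mul_eq_mul_div, div_neg, mul_div_cancel_right₀ _ ha.ne] at this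
  linarith [neg_abs_le M]

theorem setIntegral_mul_exp_sub_one_nonpos {k ζ : ℝ → ℝ} (s : Set ℝ) (hk : ∀ t, 0 ≤ k t)
    (hζ : ∀ t, ζ t ≤ 0) : ∫ t in s, k t * (exp (ζ t) - 1) ≤ 0 :=
  integral_nonpos fun t =>
    mul_nonpos_of_nonneg_of_nonpos (hk t) (sub_nonpos.mpr (exp_le_one_iff.mpr (hζ t)))

theorem stmt2_general (T : ℝ)
    (μ : MeasureTheory.SignedMeasure ℝ)
    (hμsupp : ∀ A : Set ℝ, MeasurableSet A → A ∩ Set.Ioo 0 T = ∅ → μ A = 0)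
    (k : ℝ → ℝ) (hk_nonneg : ∀ t, 0 ≤ k t)
    (M : ℝ)
    (hsup : ∀ ζ : ℝ → ℝ, ContDiff ℝ 1 ζ → HasCompactSupport ζ →
      tsupport ζ ⊆ Set.Ioo 0 T →
      sintegral μ ζ - ∫ t in Set.Ioo (0:ℝ) T, k t * (Real.exp (ζ t) - 1) ≤ M) :
    ∀ A : Set ℝ, MeasurableSet A → 0 ≤ μ A := by
  have hnonneg : ∀ φ : ℝ → ℝ, ContDiff ℝ 1 φ → HasCompactSupport φ → tsupport φ ⊆ Ioo 0 T →
      (∀ x, 0 ≤ φ x) → 0 ≤ sintegral μ φ := by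
    intro φ hφ hcs hts hnn
    refine nonneg_of_forall_pos_le_mul (M := -M) fun c hc => ?_
    have hζ := hsup (fun x => -c * φ x) (contDiff_const.mul hφ) hcs.mul_left
      (tsupport_mul_subset_right.trans hts)
    have hk := setIntegral_mul_exp_sub_one_nonpos (Ioo 0 T) hk_nonneg
      fun t => mul_nonpos_of_nonpos_of_nonneg (neg_nonpos.mpr hc.le) (hnn t)
    rw [sintegral_const_mul] at hζ
    linarith
  intro A hA
  have hAI : MeasurableSet (A ∩ Ioo 0 T) := hA.inter measurableSet_Ioo
  rw [← μ.of_add_of_sdiff hAI hA inter_subset_left,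
    hμsupp _ (hA.diff hAI) (by rw [sdiff_self_inter, sdiff_inter_self]), add_zero]
  exact apply_nonneg_of_forall_sintegral_nonneg μ isOpen_Ioo hnonneg hAI inter_subset_right

/-- if `μ` is a finite signed Borel measure on `(0,T)`, `k ≥ 0` is
Lebesgue-integrable, and `sup_{ζ ∈ C¹_c((0,T))} [∫ ζ dμ − ∫ k(t)(e^{ζ(t)} − 1) dt] < ∞`,
then `μ` is a nonnegative measure. -/
theorem stmt2 (T : ℝ) (hT : 0 < T)
    (μ : MeasureTheory.SignedMeasure ℝ)
    (hμsupp : ∀ A : Set ℝ, MeasurableSet A → A ∩ Set.Ioo 0 T = ∅ → μ A = 0)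
    (k : ℝ → ℝ) (hk_nonneg : ∀ t, 0 ≤ k t) (hk_int : IntegrableOn k (Set.Ioo 0 T))
    (M : ℝ)
    (hsup : ∀ ζ : ℝ → ℝ, ContDiff ℝ 1 ζ → HasCompactSupport ζ →
      tsupport ζ ⊆ Set.Ioo 0 T →
      sintegral μ ζ - ∫ t in Set.Ioo (0:ℝ) T, k t * (Real.exp (ζ t) - 1) ≤ M) :
    ∀ A : Set ℝ, MeasurableSet A → 0 ≤ μ A :=
  stmt2_general T μ hμsupp k hk_nonneg M hsup
end

section
/- Let μ be a finite nonnegative Borel measure on the interval (0,T) and let k : (0,T) → ℝ_{≥0} be Lebesgue-integrable. If sup over ζ ∈ C^1_c((0,T); ℝ) of [∫_{(0,T)} ζ dμ − ∫_0^T k(t)(e^{ζ(t)} − 1) dt] is finite, then μ is absolutely continuous with respect to Lebesgue measure on (0,T). -/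
/-!
If `μ` charged a null compact set `K ⊆ Ω`, pick an open `U ⊇ K` with `∫_{Ω ∩ U} k ≤ 1 / (e^c - 1)`
(outer regularity of the finite measure `k ν`) and a bump `f` with values in `[0, 1]`, equal to `1`
on `K` and supported in `Ω ∩ U`. The test function `ζ = c f` has `∫ ζ dμ ≥ c μ(K)` while
`∫_Ω k (e^ζ - 1) dν ≤ (e^c - 1) ∫_{Ω ∩ U} k dν ≤ 1`, so `c μ(K) ≤ M + 1` for all `c > 0` and
`μ(K) = 0`. Inner regularity of `μ` by compact sets then gives `μ ≪ ν`.
-/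

open MeasureTheory Real Set

open scoped Manifold in
theorem exists_contDiff_tsupport_subset_eqOn_one {E : Type*} [NormedAddCommGroup E]
    [NormedSpace ℝ E] [FiniteDimensional ℝ E] {n : ℕ∞} {K U : Set E} (hK : IsCompact K)
    (hU : IsOpen U) (hKU : K ⊆ U) :
    ∃ f : E → ℝ, ContDiff ℝ n f ∧ HasCompactSupport f ∧ tsupport f ⊆ U ∧ EqOn f 1 K ∧
      ∀ x, f x ∈ Icc 0 1 := by
  obtain ⟨r, hKr⟩ := hK.isBounded.subset_ball 0
  set V := U ∩ Metric.ball 0 r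
  obtain ⟨f, hf0, hf1, hf01⟩ := exists_contMDiffMap_zero_one_nhds_of_isClosed 𝓘(ℝ, E) (n := n)
    (hU.inter Metric.isOpen_ball).isClosed_compl hK.isClosed
    (disjoint_compl_left_iff_subset.mpr (subset_inter hKU hKr))
  have hfV : tsupport f ⊆ V := fun x hx ↦ by
    by_contra hxV
    exact notMem_tsupport_iff_eventuallyEq.mpr (hf0.filter_mono (nhds_le_nhdsSet hxV)) hx
  refine ⟨f, contMDiff_iff_contDiff.mp f.contMDiff, ?_, hfV.trans inter_subset_left,
    fun x hx ↦ hf1.self_of_nhdsSet x hx, hf01⟩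
  exact (isCompact_closedBall 0 r).of_isClosed_subset (isClosed_tsupport _)
    (hfV.trans (inter_subset_right.trans Metric.ball_subset_closedBall))

theorem MeasureTheory.Measure.absolutelyContinuous_of_forall_isCompact {X : Type*}
    [TopologicalSpace X] [MeasurableSpace X] {μ ν : Measure X} [μ.InnerRegular] {S : Set X}
    (hS : MeasurableSet S) (hμS : μ Sᶜ = 0) (h : ∀ K ⊆ S, IsCompact K → ν K = 0 → μ K = 0) :
    μ ≪ ν := by
  refine Measure.AbsolutelyContinuous.mk fun s hs hνs ↦ ?_
  rw [← measure_inter_conull hμS, (hs.inter hS).measure_eq_iSup_isCompact]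
  simp only [ENNReal.iSup_eq_zero]
  exact fun K hK hKc ↦ h K (hK.trans inter_subset_right) hKc
    (measure_mono_null (hK.trans inter_subset_left) hνs)

theorem MeasureTheory.measureReal_le_integral_of_eqOn_one {X : Type*} [MeasurableSpace X]
    {μ : Measure X} {f : X → ℝ} {K : Set X} (hK : MeasurableSet K)
    (hf : Integrable f μ) (hf0 : 0 ≤ f) (hfK : EqOn f 1 K) : μ.real K ≤ ∫ x, f x ∂μ := by
  calc μ.real K = ∫ x in K, f x ∂μ := by
        rw [setIntegral_congr_fun hK hfK]
        simp
    _ ≤ ∫ x, f x ∂μ := setIntegral_le_integral hf (.of_forall hf0)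

theorem MeasureTheory.setIntegral_mul_exp_sub_one_le {X : Type*} [MeasurableSpace X]
    {μ : Measure X} {S U : Set X} {k ζ : X → ℝ} {c : ℝ} (hU : MeasurableSet U)
    (hk0 : ∀ x, 0 ≤ k x) (hk : IntegrableOn k S μ) (hζ0 : ∀ x, 0 ≤ ζ x) (hζc : ∀ x, ζ x ≤ c)
    (hζU : ∀ x ∉ U, ζ x = 0) :
    ∫ x in S, k x * (exp (ζ x) - 1) ∂μ ≤ (exp c - 1) * ∫ x in S ∩ U, k x ∂μ := by
  have hbound : ∀ x, k x * (exp (ζ x) - 1) ≤ U.indicator (fun x ↦ (exp c - 1) * k x) x := by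
    intro x
    by_cases hx : x ∈ U
    · rw [indicator_of_mem hx, mul_comm]
      gcongr
      · exact hk0 x
      · exact hζc x
    · simp [indicator_of_notMem hx, hζU x hx]
  calc ∫ x in S, k x * (exp (ζ x) - 1) ∂μ
      ≤ ∫ x in S, U.indicator (fun x ↦ (exp c - 1) * k x) x ∂μ :=
        integral_mono_of_nonneg (.of_forall fun x ↦ mul_nonneg (hk0 x) (by simp [hζ0 x]))
          ((hk.const_mul _).indicator hU) (.of_forall hbound)
    _ = (exp c - 1) * ∫ x in S ∩ U, k x ∂μ := by
        rw [setIntegral_indicator hU, integral_const_mul]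

theorem MeasureTheory.exists_isOpen_superset_setIntegral_lt {X : Type*} [TopologicalSpace X]
    [TopologicalSpace.PseudoMetrizableSpace X] [MeasurableSpace X] [BorelSpace X]
    {μ : Measure X} {S K : Set X} {k : X → ℝ} (hk0 : ∀ x, 0 ≤ k x) (hk : IntegrableOn k S μ)
    (hK : μ K = 0) {ε : ℝ} (hε : 0 < ε) :
    ∃ U, K ⊆ U ∧ IsOpen U ∧ ∫ x in S ∩ U, k x ∂μ < ε := by
  set ν := (μ.restrict S).withDensity fun x ↦ ENNReal.ofReal (k x)
  have : IsFiniteMeasure ν := isFiniteMeasure_withDensity_ofReal hk.2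
  have hνK : ν K = 0 :=
    withDensity_absolutelyContinuous _ _ (Measure.restrict_le_self.absolutelyContinuous hK)
  obtain ⟨U, hKU, hU, hνU⟩ := K.exists_isOpen_lt_of_lt (μ := ν) (ENNReal.ofReal ε)
    (by rwa [hνK, ENNReal.ofReal_pos])
  refine ⟨U, hKU, hU, ?_⟩
  have : ν U = ENNReal.ofReal (∫ x in S ∩ U, k x ∂μ) := by
    rw [withDensity_apply _ hU.measurableSet, Measure.restrict_restrict hU.measurableSet,
      ofReal_integral_eq_lintegral_ofReal (hk.mono_set inter_subset_left) (.of_forall hk0),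
      inter_comm]
  rwa [this, ENNReal.ofReal_lt_ofReal_iff hε] at hνU

section DualBound

variable {E : Type*} [NormedAddCommGroup E] [NormedSpace ℝ E] [FiniteDimensional ℝ E]
  [MeasurableSpace E] [BorelSpace E] {μ ν : Measure E} [IsFiniteMeasure μ] {Ω K : Set E}
  {k : E → ℝ} {M : ℝ}

theorem mul_measureReal_le_of_forall_contDiff_sub_le (hΩ : IsOpen Ω) (hk0 : ∀ x, 0 ≤ k x)
    (hk : IntegrableOn k Ω ν)
    (hsup : ∀ ζ : E → ℝ, ContDiff ℝ 1 ζ → HasCompactSupport ζ → tsupport ζ ⊆ Ω →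
      (∫ x, ζ x ∂μ) - ∫ x in Ω, k x * (exp (ζ x) - 1) ∂ν ≤ M)
    (hK : IsCompact K) (hKΩ : K ⊆ Ω) (hνK : ν K = 0) {c : ℝ} (hc : 0 < c) :
    c * μ.real K ≤ M + 1 := by
  have hec : 0 < exp c - 1 := sub_pos.mpr (one_lt_exp_iff.mpr hc)
  obtain ⟨U, hKU, hU, hkU⟩ := exists_isOpen_superset_setIntegral_lt hk0 hk hνK (inv_pos.mpr hec)
  obtain ⟨f, hf, hfc, hfU, hfK, hf01⟩ := exists_contDiff_tsupport_subset_eqOn_one (n := 1) hK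
    (hU.inter hΩ) (subset_inter hKU hKΩ)
  have hζ_lower : c * μ.real K ≤ ∫ x, c * f x ∂μ := by
    rw [integral_const_mul]
    gcongr
    exact measureReal_le_integral_of_eqOn_one hK.measurableSet
      (hf.continuous.integrable_of_hasCompactSupport hfc) (fun x ↦ (hf01 x).1) hfK
  have hζ_upper : ∫ x in Ω, k x * (exp (c * f x) - 1) ∂ν ≤ 1 := calc
    _ ≤ (exp c - 1) * ∫ x in Ω ∩ U, k x ∂ν := by
        refine setIntegral_mul_exp_sub_one_le hU.measurableSet hk0 hk
          (fun x ↦ mul_nonneg hc.le (hf01 x).1) (fun x ↦ mul_le_of_le_one_right hc.le (hf01 x).2)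
          fun x hx ↦ ?_
        rw [image_eq_zero_of_notMem_tsupport fun h ↦ hx (hfU h).1, mul_zero]
    _ ≤ (exp c - 1) * (exp c - 1)⁻¹ := by gcongr
    _ = 1 := mul_inv_cancel₀ hec.ne'
  have := hsup (fun x ↦ c * f x) (contDiff_const.mul hf) (hfc.mul_left)
    ((tsupport_mul_subset_right).trans (hfU.trans inter_subset_right))
  linarith

theorem measure_eq_zero_of_forall_contDiff_sub_le (hΩ : IsOpen Ω) (hk0 : ∀ x, 0 ≤ k x)
    (hk : IntegrableOn k Ω ν)
    (hsup : ∀ ζ : E → ℝ, ContDiff ℝ 1 ζ → HasCompactSupport ζ → tsupport ζ ⊆ Ω →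
      (∫ x, ζ x ∂μ) - ∫ x in Ω, k x * (exp (ζ x) - 1) ∂ν ≤ M)
    (hK : IsCompact K) (hKΩ : K ⊆ Ω) (hνK : ν K = 0) : μ K = 0 := by
  by_contra hμK
  have hpos : 0 < μ.real K := ENNReal.toReal_pos hμK (measure_ne_top μ K)
  have := mul_measureReal_le_of_forall_contDiff_sub_le hΩ hk0 hk hsup hK hKΩ hνK
    (c := (|M| + 2) / μ.real K) (by positivity)
  rw [div_mul_cancel₀ _ hpos.ne'] at this
  linarith [le_abs_self M]

theorem absolutelyContinuous_of_forall_contDiff_sub_le (hΩ : IsOpen Ω) (hμΩ : μ Ωᶜ = 0)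
    (hk0 : ∀ x, 0 ≤ k x) (hk : IntegrableOn k Ω ν)
    (hsup : ∀ ζ : E → ℝ, ContDiff ℝ 1 ζ → HasCompactSupport ζ → tsupport ζ ⊆ Ω →
      (∫ x, ζ x ∂μ) - ∫ x in Ω, k x * (exp (ζ x) - 1) ∂ν ≤ M) :
    μ ≪ ν :=
  Measure.absolutelyContinuous_of_forall_isCompact hΩ.measurableSet hμΩ fun _ hKΩ hK hνK ↦
    measure_eq_zero_of_forall_contDiff_sub_le hΩ hk0 hk hsup hK hKΩ hνK

end DualBound

theorem stmt3_general (T : ℝ)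
    (μ : Measure ℝ) [IsFiniteMeasure μ]
    (hμsupp : μ (Set.Ioo 0 T)ᶜ = 0)
    (k : ℝ → ℝ) (hk_nonneg : ∀ t, 0 ≤ k t) (hk_int : IntegrableOn k (Set.Ioo 0 T))
    (M : ℝ)
    (hsup : ∀ ζ : ℝ → ℝ, ContDiff ℝ 1 ζ → HasCompactSupport ζ →
      tsupport ζ ⊆ Set.Ioo 0 T →
      (∫ t, ζ t ∂μ) - ∫ t in Set.Ioo (0:ℝ) T, k t * (Real.exp (ζ t) - 1) ≤ M) :
    μ ≪ (volume : Measure ℝ) :=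
  absolutelyContinuous_of_forall_contDiff_sub_le isOpen_Ioo hμsupp hk_nonneg hk_int hsup

/-- if `μ` is a finite nonnegative Borel measure on `(0,T)`, `k ≥ 0` is
Lebesgue-integrable, and `sup_{ζ ∈ C¹_c((0,T))} [∫ ζ dμ − ∫ k(t)(e^{ζ(t)} − 1) dt] < ∞`,
then `μ` is absolutely continuous with respect to Lebesgue measure. -/
theorem stmt3 (T : ℝ) (hT : 0 < T)
    (μ : Measure ℝ) [IsFiniteMeasure μ]
    (hμsupp : μ (Set.Ioo 0 T)ᶜ = 0)
    (k : ℝ → ℝ) (hk_nonneg : ∀ t, 0 ≤ k t) (hk_int : IntegrableOn k (Set.Ioo 0 T))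
    (M : ℝ)
    (hsup : ∀ ζ : ℝ → ℝ, ContDiff ℝ 1 ζ → HasCompactSupport ζ →
      tsupport ζ ⊆ Set.Ioo 0 T →
      (∫ t, ζ t ∂μ) - ∫ t in Set.Ioo (0:ℝ) T, k t * (Real.exp (ζ t) - 1) ≤ M) :
    μ ≪ (volume : Measure ℝ) :=
  stmt3_general T μ hμsupp k hk_nonneg hk_int M hsup
end

section
/- Let ℛ be a finite set and let j, k : (0,T) → ℝ^ℛ_{≥0} be measurable with every component of j and of k Lebesgue-integrable. Then sup over ζ ∈ L^∞((0,T); ℝ^ℛ) of ∫_0^T [ζ(t)·j(t) − Σ_{r∈ℛ} k^r(t)(e^{ζ^r(t)} − 1)] dt equals ∫_0^T Σ_{r∈ℛ} s(j^r(t) | k^r(t)) dt, as values in [0,∞]. -/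
open MeasureTheory Real Set

open Filter Topology

noncomputable def fval (j k z : ℝ) : ℝ := z * j - k * (Real.exp z - 1)

lemma fval_mono_left {j k z₁ z₂ : ℝ} (hk : 0 ≤ k) (h12 : z₁ ≤ z₂)
    (h2 : k * Real.exp z₂ ≤ j) : fval j k z₁ ≤ fval j k z₂ := by
  have h1 := Real.add_one_le_exp (z₁ - z₂)
  rw [Real.exp_sub] at h1
  have e2 : (0:ℝ) < Real.exp z₂ := Real.exp_pos z₂
  have key : (z₁ - z₂ + 1) * Real.exp z₂ ≤ Real.exp z₁ := (le_div_iff₀ e2).mp h1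
  unfold fval
  nlinarith [mul_le_mul_of_nonneg_left key hk,
    mul_le_mul_of_nonneg_left h2 (sub_nonneg.2 h12)]

lemma fval_anti {j k z₁ z₂ : ℝ} (hk : 0 ≤ k) (h12 : z₂ ≤ z₁)
    (h2 : j ≤ k * Real.exp z₂) : fval j k z₁ ≤ fval j k z₂ := by
  have h1 := Real.add_one_le_exp (z₁ - z₂)
  rw [Real.exp_sub] at h1
  have e2 : (0:ℝ) < Real.exp z₂ := Real.exp_pos z₂
  have key : (z₁ - z₂ + 1) * Real.exp z₂ ≤ Real.exp z₁ := (le_div_iff₀ e2).mp h1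
  unfold fval
  nlinarith [mul_le_mul_of_nonneg_left key hk,
    mul_le_mul_of_nonneg_left h2 (sub_nonneg.2 h12)]

lemma fval_le_bes {j k : ℝ} (hj : 0 ≤ j) (hk : 0 ≤ k) (z : ℝ) :
    ENNReal.ofReal (fval j k z) ≤ bes j k := by
  unfold bes
  by_cases hj0 : j = 0
  · subst hj0
    simp only [if_pos rfl]
    apply ENNReal.ofReal_le_ofReal
    have := Real.exp_pos z
    unfold fval; nlinarith
  · rw [if_neg hj0]
    by_cases hk0 : k = 0
    · simp [hk0]
    · rw [if_neg hk0]
      apply ENNReal.ofReal_le_ofReal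
      have hj' : 0 < j := lt_of_le_of_ne hj (Ne.symm hj0)
      have hk' : 0 < k := lt_of_le_of_ne hk (Ne.symm hk0)
      set L := Real.log (j / k) with hL
      have h1 := Real.add_one_le_exp (z - L)
      rw [Real.exp_sub, Real.exp_log (by positivity : (0:ℝ) < j / k)] at h1
      have h2 : (z - L + 1) * (j / k) ≤ Real.exp z := (le_div_iff₀ (by positivity)).mp h1
      have h3 : (z - L + 1) * j ≤ Real.exp z * k := by
        have := mul_le_mul_of_nonneg_right h2 hk
        rwa [mul_assoc, div_mul_cancel₀ _ (ne_of_gt hk')] at this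
      unfold fval; nlinarith

noncomputable def zfun (n j k : ℝ) : ℝ :=
  if j = 0 then -n else if k = 0 then n else max (-n) (min n (Real.log (j / k)))

lemma zfun_abs_le {j k : ℝ} {n : ℝ} (hn : 0 ≤ n) : |zfun n j k| ≤ n := by
  unfold zfun
  split_ifs with h1 h2
  · rw [abs_neg, abs_of_nonneg hn]
  · rw [abs_of_nonneg hn]
  · rw [abs_le]
    constructor
    · exact le_max_left _ _
    · exact max_le (by linarith) (min_le_left _ _)

lemma fval_zero (j k : ℝ) : fval j k 0 = 0 := by simp [fval]

lemma keL {j k : ℝ} (hj : 0 < j) (hk : 0 < k) :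
    k * Real.exp (Real.log (j / k)) = j := by
  rw [Real.exp_log (by positivity)]
  field_simp

lemma fval_zfun_nonneg {j k : ℝ} (hj : 0 ≤ j) (hk : 0 ≤ k) {n : ℝ} (hn : 0 ≤ n) :
    0 ≤ fval j k (zfun n j k) := by
  unfold zfun
  split_ifs with h1 h2
  · subst h1
    have he : Real.exp (-n) ≤ 1 := by
      rw [← Real.exp_zero]
      exact Real.exp_le_exp.mpr (by linarith)
    unfold fval; nlinarith
  · subst h2
    unfold fval
    nlinarith
  · have hj' : 0 < j := lt_of_le_of_ne hj (Ne.symm h1)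
    have hk' : 0 < k := lt_of_le_of_ne hk (Ne.symm h2)
    set L := Real.log (j / k) with hLdef
    have hkeL := keL hj' hk'
    rcases le_total 0 L with hL | hL
    · have hz : max (-n) (min n L) = min n L :=
        max_eq_right (le_trans (by linarith) (le_min hn hL))
      rw [hz, ← fval_zero j k]
      refine fval_mono_left hk (le_min hn hL) ?_
      have : Real.exp (min n L) ≤ Real.exp L := Real.exp_le_exp.mpr (min_le_right _ _)
      nlinarith
    · have hmin : min n L = L := min_eq_right (le_trans hL hn)
      rw [hmin, ← fval_zero j k]
      refine fval_anti hk (max_le (by linarith) hL) ?_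
      have : Real.exp L ≤ Real.exp (max (-n) L) := Real.exp_le_exp.mpr (le_max_right _ _)
      nlinarith

lemma fval_zfun_mono {j k : ℝ} (hj : 0 ≤ j) (hk : 0 ≤ k) {n m : ℝ}
    (hn : 0 ≤ n) (hnm : n ≤ m) :
    fval j k (zfun n j k) ≤ fval j k (zfun m j k) := by
  unfold zfun
  split_ifs with h1 h2
  · exact fval_anti hk (by linarith) (by nlinarith [Real.exp_pos (-m)])
  · subst h2
    unfold fval
    nlinarith
  · have hj' : 0 < j := lt_of_le_of_ne hj (Ne.symm h1)
    have hk' : 0 < k := lt_of_le_of_ne hk (Ne.symm h2)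
    set L := Real.log (j / k) with hLdef
    have hkeL := keL hj' hk'
    rcases le_total 0 L with hL | hL
    · have hz1 : max (-n) (min n L) = min n L :=
        max_eq_right (le_trans (by linarith) (le_min hn hL))
      have hz2 : max (-m) (min m L) = min m L :=
        max_eq_right (le_trans (by linarith) (le_min (by linarith) hL))
      rw [hz1, hz2]
      refine fval_mono_left hk (min_le_min hnm le_rfl) ?_
      have : Real.exp (min m L) ≤ Real.exp L := Real.exp_le_exp.mpr (min_le_right _ _)
      nlinarith
    · have hz1 : min n L = L := min_eq_right (le_trans hL hn)
      have hz2 : min m L = L := min_eq_right (le_trans hL (by linarith))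
      rw [hz1, hz2]
      refine fval_anti hk (max_le_max (by linarith) le_rfl) ?_
      have : Real.exp L ≤ Real.exp (max (-m) L) := Real.exp_le_exp.mpr (le_max_right _ _)
      nlinarith

lemma tendsto_fval_zfun {j k : ℝ} (hj : 0 ≤ j) (hk : 0 ≤ k) :
    Tendsto (fun n : ℕ => ENNReal.ofReal (fval j k (zfun n j k))) atTop (𝓝 (bes j k)) := by
  by_cases hj0 : j = 0
  · subst hj0
    have heq : ∀ n : ℕ, fval 0 k (zfun n 0 k) = k - k * Real.exp (-(n:ℝ)) := by
      intro n; simp [zfun, fval]; ring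
    simp only [heq, bes, if_pos rfl]
    refine (ENNReal.continuous_ofReal.tendsto k).comp ?_
    have h1 : Tendsto (fun n : ℕ => Real.exp (-(n:ℝ))) atTop (𝓝 0) :=
      Real.tendsto_exp_atBot.comp (tendsto_neg_atBot_iff.mpr tendsto_natCast_atTop_atTop)
    have := (tendsto_const_nhds (x := k)).sub (h1.const_mul k)
    simpa using this
  · have hj' : 0 < j := lt_of_le_of_ne hj (Ne.symm hj0)
    by_cases hk0 : k = 0
    · subst hk0
      have heq : ∀ n : ℕ, fval j 0 (zfun n j 0) = (n:ℝ) * j := by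
        intro n; simp [zfun, fval, hj0]
      simp only [heq, bes, if_neg hj0, if_pos rfl]
      exact ENNReal.tendsto_ofReal_atTop.comp
        (Tendsto.atTop_mul_const hj' tendsto_natCast_atTop_atTop)
    · have hk' : 0 < k := lt_of_le_of_ne hk (Ne.symm hk0)
      set L := Real.log (j / k) with hLdef
      have hkeL := keL hj' hk'
      rw [bes, if_neg hj0, if_neg hk0]
      refine tendsto_const_nhds.congr' ?_
      filter_upwards [eventually_ge_atTop ⌈|L|⌉₊] with n hn
      have habs : |L| ≤ (n:ℝ) := (Nat.le_ceil _).trans (Nat.cast_le.mpr hn)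
      have h1 : L ≤ (n:ℝ) := (le_abs_self L).trans habs
      have h2 : -(n:ℝ) ≤ L := by
        have := (neg_abs_le L); linarith
      have hz : zfun n j k = L := by
        rw [zfun, if_neg hj0, if_neg hk0, min_eq_right h1, max_eq_right h2]
      rw [hz]
      congr 1
      rw [fval, Real.exp_log (by positivity)]
      field_simp
      ring

lemma iSup_ofReal_fval_zfun {j k : ℝ} (hj : 0 ≤ j) (hk : 0 ≤ k) :
    (⨆ n : ℕ, ENNReal.ofReal (fval j k (zfun n j k))) = bes j k := by
  refine tendsto_nhds_unique (tendsto_atTop_iSup ?_) (tendsto_fval_zfun hj hk)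
  intro a b hab
  exact ENNReal.ofReal_le_ofReal
    (fval_zfun_mono hj hk (n := a) (Nat.cast_nonneg a) (Nat.cast_le.mpr hab))

lemma ofReal_sum_le {ι : Type*} (s : Finset ι) (f : ι → ℝ) :
    ENNReal.ofReal (∑ i ∈ s, f i) ≤ ∑ i ∈ s, ENNReal.ofReal (f i) := by
  induction s using Finset.cons_induction with
  | empty => simp
  | cons a s ha ih =>
    rw [Finset.sum_cons, Finset.sum_cons]
    exact ENNReal.ofReal_add_le.trans (add_le_add le_rfl ih)

lemma ofReal_integral_le {α : Type*} [MeasurableSpace α] (μ : Measure α) (f : α → ℝ) :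
    ENNReal.ofReal (∫ x, f x ∂μ) ≤ ∫⁻ x, ENNReal.ofReal (f x) ∂μ := by
  by_cases hfi : Integrable f μ
  · have hpos : Integrable (fun x => max (f x) 0) μ := hfi.pos_part
    calc ENNReal.ofReal (∫ x, f x ∂μ)
        ≤ ENNReal.ofReal (∫ x, max (f x) 0 ∂μ) :=
          ENNReal.ofReal_le_ofReal (integral_mono hfi hpos fun x => le_max_left _ _)
      _ = ∫⁻ x, ENNReal.ofReal (max (f x) 0) ∂μ :=
          ofReal_integral_eq_lintegral_ofReal hpos (ae_of_all _ fun x => le_max_right _ _)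
      _ = ∫⁻ x, ENNReal.ofReal (f x) ∂μ := by
          congr 1 with x
          rcases le_total (f x) 0 with h | h
          · rw [max_eq_right h, ENNReal.ofReal_zero, ENNReal.ofReal_of_nonpos h]
          · rw [max_eq_left h]
  · rw [integral_undef hfi]; simp

lemma fval_abs_le {j k z n : ℝ} (hz : |z| ≤ n) :
    |fval j k z| ≤ n * |j| + (Real.exp n + 1) * |k| := by
  have h1 : |z * j| ≤ n * |j| := by
    rw [abs_mul]; exact mul_le_mul_of_nonneg_right hz (abs_nonneg _)
  have h2 : |k * (Real.exp z - 1)| ≤ (Real.exp n + 1) * |k| := by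
    rw [abs_mul, mul_comm]
    refine mul_le_mul_of_nonneg_right ?_ (abs_nonneg _)
    have he : Real.exp z ≤ Real.exp n := Real.exp_le_exp.mpr ((le_abs_self z).trans hz)
    have hep : 0 < Real.exp z := Real.exp_pos z
    rw [abs_le]; constructor <;> nlinarith
  calc |fval j k z| = |z * j + -(k * (Real.exp z - 1))| := by rw [fval, sub_eq_add_neg]
    _ ≤ |z * j| + |-(k * (Real.exp z - 1))| := abs_add_le _ _
    _ = |z * j| + |k * (Real.exp z - 1)| := by rw [abs_neg]
    _ ≤ n * |j| + (Real.exp n + 1) * |k| := add_le_add h1 h2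

lemma measurable_zfun (n : ℝ) : Measurable (fun p : ℝ × ℝ => zfun n p.1 p.2) := by
  unfold zfun
  refine Measurable.ite (measurable_fst (measurableSet_singleton 0)) measurable_const ?_
  refine Measurable.ite (measurable_snd (measurableSet_singleton 0)) measurable_const ?_
  exact measurable_const.max (measurable_const.min
    (Real.measurable_log.comp (measurable_fst.div measurable_snd)))

/-- for measurable, componentwise integrable `j, k : (0,T) → ℝ^ℛ₊`,
the supremum over bounded measurable (`L^∞`) `ζ : (0,T) → ℝ^ℛ` of
`∫₀ᵀ [ζ(t)·j(t) − Σ_r k^r(t)(e^{ζ^r(t)} − 1)] dt` equals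
`∫₀ᵀ Σ_r s(j^r(t)|k^r(t)) dt`, as values in `[0,∞]`. -/
theorem stmt6
    {ℛ : Type*} [Fintype ℛ]
    (T : ℝ) (hT : 0 < T)
    (j k : ℝ → ℛ → ℝ)
    (hj_meas : Measurable j) (hk_meas : Measurable k)
    (hj_nonneg : ∀ t ∈ Set.Ioo (0:ℝ) T, ∀ r, 0 ≤ j t r)
    (hk_nonneg : ∀ t ∈ Set.Ioo (0:ℝ) T, ∀ r, 0 ≤ k t r)
    (hj_int : IntegrableOn j (Set.Ioo 0 T))
    (hk_int : IntegrableOn k (Set.Ioo 0 T)) :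
    (⨆ ζ : {ζ : ℝ → ℛ → ℝ // Measurable ζ ∧ ∃ C : ℝ, ∀ t r, |ζ t r| ≤ C},
      ENNReal.ofReal (∫ t in Set.Ioo (0:ℝ) T,
        ∑ r, ((ζ : ℝ → ℛ → ℝ) t r * j t r
          - k t r * (Real.exp ((ζ : ℝ → ℛ → ℝ) t r) - 1))))
    = ∫⁻ t in Set.Ioo (0:ℝ) T, ∑ r, bes (j t r) (k t r) := by

  have hjr_meas : ∀ r, Measurable (fun t => j t r) :=
    fun r => (measurable_pi_apply r).comp hj_meas
  have hkr_meas : ∀ r, Measurable (fun t => k t r) :=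
    fun r => (measurable_pi_apply r).comp hk_meas
  have hjr_int : ∀ r, Integrable (fun t => j t r) (volume.restrict (Set.Ioo 0 T)) :=
    fun r => hj_int.norm.mono' (hjr_meas r).aestronglyMeasurable
      (ae_of_all _ fun t => by simpa using norm_le_pi_norm (j t) r)
  have hkr_int : ∀ r, Integrable (fun t => k t r) (volume.restrict (Set.Ioo 0 T)) :=
    fun r => hk_int.norm.mono' (hkr_meas r).aestronglyMeasurable
      (ae_of_all _ fun t => by simpa using norm_le_pi_norm (k t) r)
  have hZr : ∀ (n : ℝ) r, Measurable (fun t => zfun n (j t r) (k t r)) :=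
    fun n r => (measurable_zfun n).comp ((hjr_meas r).prodMk (hkr_meas r))
  have hterm_meas : ∀ (n : ℝ) r,
      Measurable (fun t => fval (j t r) (k t r) (zfun n (j t r) (k t r))) := by
    intro n r
    unfold fval
    exact ((hZr n r).mul (hjr_meas r)).sub
      ((hkr_meas r).mul ((Real.measurable_exp.comp (hZr n r)).sub measurable_const))
  apply le_antisymm
  · -- upper bound
    refine iSup_le ?_
    rintro ⟨ζ, hζm, C, hC⟩
    refine (ofReal_integral_le _ _).trans ?_
    refine lintegral_mono_ae ?_
    filter_upwards [ae_restrict_mem measurableSet_Ioo] with t ht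
    refine (ofReal_sum_le _ _).trans ?_
    exact Finset.sum_le_sum fun r _ =>
      fval_le_bes (hj_nonneg t ht r) (hk_nonneg t ht r) (ζ t r)
  · -- lower bound
    have hFint : ∀ n : ℕ, Integrable
        (fun t => ∑ r, fval (j t r) (k t r) (zfun n (j t r) (k t r)))
        (volume.restrict (Set.Ioo 0 T)) := by
      intro n
      refine integrable_finset_sum _ fun r _ => ?_
      refine Integrable.mono'
        (g := fun t => (n:ℝ) * |j t r| + (Real.exp n + 1) * |k t r|)
        (((hjr_int r).abs.const_mul _).add ((hkr_int r).abs.const_mul _))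
        (hterm_meas n r).aestronglyMeasurable (ae_of_all _ fun t => ?_)
      simpa [Real.norm_eq_abs] using
        fval_abs_le (j := j t r) (k := k t r) (zfun_abs_le (n := (n:ℝ)) (Nat.cast_nonneg n))
    have key1 : ∀ n : ℕ,
        (∫⁻ t in Set.Ioo (0:ℝ) T, ∑ r,
          ENNReal.ofReal (fval (j t r) (k t r) (zfun n (j t r) (k t r))))
        = ENNReal.ofReal (∫ t in Set.Ioo (0:ℝ) T, ∑ r,
            fval (j t r) (k t r) (zfun n (j t r) (k t r))) := by
      intro n
      rw [ofReal_integral_eq_lintegral_ofReal (hFint n) ?nn]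
      case nn =>
        filter_upwards [ae_restrict_mem measurableSet_Ioo] with t ht
        exact Finset.sum_nonneg fun r _ =>
          fval_zfun_nonneg (hj_nonneg t ht r) (hk_nonneg t ht r) (Nat.cast_nonneg n)
      refine lintegral_congr_ae ?_
      filter_upwards [ae_restrict_mem measurableSet_Ioo] with t ht
      exact (ENNReal.ofReal_sum_of_nonneg fun r _ =>
        fval_zfun_nonneg (hj_nonneg t ht r) (hk_nonneg t ht r) (Nat.cast_nonneg n)).symm
    have hmono : ∀ t ∈ Set.Ioo (0:ℝ) T, ∀ r, Monotone (fun n : ℕ =>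
        ENNReal.ofReal (fval (j t r) (k t r) (zfun n (j t r) (k t r)))) := by
      intro t ht r a b hab
      exact ENNReal.ofReal_le_ofReal (fval_zfun_mono (hj_nonneg t ht r)
        (hk_nonneg t ht r) (Nat.cast_nonneg a) (Nat.cast_le.mpr hab))
    have step1 : (∫⁻ t in Set.Ioo (0:ℝ) T, ∑ r, bes (j t r) (k t r))
        = ⨆ n : ℕ, ∫⁻ t in Set.Ioo (0:ℝ) T, ∑ r,
            ENNReal.ofReal (fval (j t r) (k t r) (zfun n (j t r) (k t r))) := by
      have hGmeas : ∀ n : ℕ, AEMeasurable (fun t => ∑ r,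
          ENNReal.ofReal (fval (j t r) (k t r) (zfun (n:ℝ) (j t r) (k t r))))
          (volume.restrict (Set.Ioo (0:ℝ) T)) := fun n =>
        (Finset.measurable_sum _ fun r _ => (ENNReal.measurable_ofReal.comp
          (hterm_meas n r) : Measurable _)).aemeasurable
      have hGmono : ∀ᵐ t ∂(volume.restrict (Set.Ioo (0:ℝ) T)), Monotone (fun n : ℕ =>
          ∑ r, ENNReal.ofReal (fval (j t r) (k t r) (zfun (n:ℝ) (j t r) (k t r)))) := by
        filter_upwards [ae_restrict_mem measurableSet_Ioo] with t ht a b hab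
        exact Finset.sum_le_sum fun r _ => hmono t ht r hab
      rw [← lintegral_iSup' hGmeas hGmono]
      refine lintegral_congr_ae ?_
      filter_upwards [ae_restrict_mem measurableSet_Ioo] with t ht
      calc (∑ r, bes (j t r) (k t r))
          = ∑ r, ⨆ n : ℕ, ENNReal.ofReal (fval (j t r) (k t r) (zfun n (j t r) (k t r))) :=
            Finset.sum_congr rfl fun r _ =>
              (iSup_ofReal_fval_zfun (hj_nonneg t ht r) (hk_nonneg t ht r)).symm
        _ = ⨆ n : ℕ, ∑ r, ENNReal.ofReal (fval (j t r) (k t r) (zfun n (j t r) (k t r))) :=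
            ENNReal.finsetSum_iSup_of_monotone fun r => hmono t ht r
    rw [step1]
    refine iSup_le fun n => ?_
    refine le_iSup_of_le ⟨fun t r => zfun n (j t r) (k t r),
      measurable_pi_lambda _ fun r => hZr n r,
      ⟨(n:ℝ), fun t r => zfun_abs_le (Nat.cast_nonneg n)⟩⟩ ?_
    exact le_of_eq (key1 n)
end

section
/- Let ℛ be a finite set and let j, k : (0,T) → ℝ^ℛ_{≥0} be measurable with every component of j and of k Lebesgue-integrable. Then sup over ζ ∈ C^1_c((0,T); ℝ^ℛ) of ∫_0^T [ζ(t)·j(t) − Σ_{r∈ℛ} k^r(t)(e^{ζ^r(t)} − 1)] dt equals sup over ζ ∈ L^∞((0,T); ℝ^ℛ) of the same expression. -/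
/-
A smooth compactly supported `ζ` is bounded and measurable, which gives one inequality. For the
other, a bounded measurable `ζ` is the a.e. limit on `(0,T)` of uniformly bounded smooth functions
with compact support in `(0,T)`: mollify `ζ` (Lebesgue differentiation gives a.e. convergence) and
multiply by smooth cutoffs that are eventually `1` at each point of `(0,T)`. Along such a sequence
the functional converges by dominated convergence, the integrand being bounded by
`C |j| + (e^C + 1) |k|`.
-/

open MeasureTheory Real Set Filter Topology Convolution

theorem abs_mul_sub_mul_exp_sub_one_le {x a b C : ℝ} (hx : |x| ≤ C) :
    |x * a - b * (exp x - 1)| ≤ C * |a| + (exp C + 1) * |b| := by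
  have hexp : |exp x - 1| ≤ exp C + 1 := by
    rw [abs_le]
    constructor <;> linarith [exp_pos x, exp_le_exp.2 (abs_le.1 hx).2]
  calc |x * a - b * (exp x - 1)| ≤ |x| * |a| + |b| * |exp x - 1| := by
        rw [← abs_mul, ← abs_mul]; exact abs_sub _ _
    _ ≤ C * |a| + (exp C + 1) * |b| := by
        rw [mul_comm |b|]
        gcongr

theorem exists_norm_le_iff_exists_abs_le {α ℛ : Type*} [Fintype ℛ] {f : α → ℛ → ℝ} :
    (∃ C, ∀ t, ‖f t‖ ≤ C) ↔ ∃ C, ∀ t r, |f t r| ≤ C := by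
  constructor
  · rintro ⟨C, hC⟩
    exact ⟨C, fun t r ↦ (norm_le_pi_norm (f t) r).trans (hC t)⟩
  · rintro ⟨C, hC⟩
    exact ⟨max C 0, fun t ↦ (pi_norm_le_iff_of_nonneg (le_max_right C 0)).2
      fun r ↦ (hC t r).trans (le_max_left C 0)⟩

theorem MeasureTheory.AEStronglyMeasurable.exists_seq_contDiff_tendsto_ae_of_norm_le
    {G E : Type*} [NormedAddCommGroup G] [NormedSpace ℝ G] [FiniteDimensional ℝ G]
    [MeasurableSpace G] [BorelSpace G] {μ : Measure G} [μ.IsAddHaarMeasure]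
    [NormedAddCommGroup E] [NormedSpace ℝ E] [CompleteSpace E] {n : ℕ∞}
    {f : G → E} {C : ℝ} (hf : AEStronglyMeasurable f μ) (hC : ∀ x, ‖f x‖ ≤ C) :
    ∃ g : ℕ → G → E, (∀ m, ContDiff ℝ n (g m)) ∧ (∀ m x, ‖g m x‖ ≤ C) ∧
      ∀ᵐ x ∂μ, Tendsto (fun m ↦ g m x) atTop (𝓝 (f x)) := by
  have hloc : LocallyIntegrable f μ :=
    (locallyIntegrable_const C).mono hf
      (ae_of_all _ fun x ↦ (hC x).trans (by rw [Real.norm_eq_abs]; exact le_abs_self C))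
  let φ : ℕ → ContDiffBump (0 : G) := fun m ↦
    ⟨1 / (m + 1) / 2, 1 / (m + 1), by positivity, half_lt_self (by positivity)⟩
  refine ⟨fun m ↦ (φ m).normed μ ⋆[ContinuousLinearMap.lsmul ℝ ℝ, μ] f, fun m ↦ ?_,
    fun m x ↦ ?_, ?_⟩
  · exact (φ m).hasCompactSupport_normed.contDiff_convolution_left _ (φ m).contDiff_normed hloc
  · simpa using dist_convolution_le ((norm_nonneg _).trans (hC x))
      (φ m).support_normed_eq.subset (φ m).nonneg_normed (φ m).integral_normed hf
      (z₀ := 0) (x₀ := x) fun y _ ↦ by simpa using hC y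
  · exact ContDiffBump.ae_convolution_tendsto_right_of_locallyIntegrable (K := 2)
      tendsto_one_div_add_atTop_nhds_zero_nat
      (Eventually.of_forall fun m ↦ (mul_div_cancel₀ _ two_ne_zero).ge) hloc

theorem exists_seq_contDiff_tsupport_subset_Ioo_eventually_eq_one {a b : ℝ} (hab : a < b)
    {n : ℕ∞} :
    ∃ χ : ℕ → ℝ → ℝ, (∀ m, ContDiff ℝ n (χ m)) ∧ (∀ m, HasCompactSupport (χ m)) ∧
      (∀ m, tsupport (χ m) ⊆ Ioo a b) ∧ (∀ m x, ‖χ m x‖ ≤ 1) ∧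
      ∀ x ∈ Ioo a b, ∀ᶠ m in atTop, χ m x = 1 := by
  set R := (b - a) / 2 with hR_def
  have hR : 0 < R := by linarith
  have hδ : ∀ m : ℕ, R / (m + 3) < R / 2 := fun m ↦
    div_lt_div_of_pos_left hR (by norm_num) (by linarith [m.cast_nonneg (α := ℝ)])
  let χ : ℕ → ContDiffBump ((a + b) / 2) := fun m ↦
    ⟨R - 2 * (R / (m + 3)), R - R / (m + 3), by linarith [hδ m],
      by linarith [show 0 < R / (m + 3) by positivity]⟩
  refine ⟨fun m ↦ χ m, fun m ↦ (χ m).contDiff, fun m ↦ (χ m).hasCompactSupport,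
    fun m ↦ ?_, fun m x ↦ ?_, fun x hx ↦ ?_⟩
  · rw [(χ m).tsupport_eq, Real.closedBall_eq_Icc]
    refine Icc_subset_Ioo ?_ ?_ <;>
      simp only [χ] <;> linarith [show 0 < R / (m + 3) by positivity]
  · rw [Real.norm_of_nonneg (χ m).nonneg]
    exact (χ m).le_one
  · have hx : |x - (a + b) / 2| < R := by
      rw [abs_lt]; constructor <;> linarith [hx.1, hx.2]
    have hlim : Tendsto (fun m : ℕ ↦ R - 2 * (R / (m + 3))) atTop (𝓝 (R - 2 * 0)) :=
      tendsto_const_nhds.sub ((tendsto_const_nhds.div_atTop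
        (tendsto_natCast_atTop_atTop.atTop_add tendsto_const_nhds)).const_mul 2)
    rw [mul_zero, sub_zero] at hlim
    filter_upwards [hlim.eventually (eventually_ge_nhds hx)] with m hm
    exact (χ m).one_of_mem_closedBall (by rwa [Metric.mem_closedBall, Real.dist_eq])

theorem exists_seq_contDiff_tsupport_subset_Ioo_tendsto_ae {a b : ℝ} (hab : a < b) {n : ℕ∞}
    {E : Type*} [NormedAddCommGroup E] [NormedSpace ℝ E] [CompleteSpace E]
    {f : ℝ → E} {C : ℝ} (hf : AEStronglyMeasurable f) (hC : ∀ x, ‖f x‖ ≤ C) :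
    ∃ g : ℕ → ℝ → E, (∀ m, ContDiff ℝ n (g m) ∧ HasCompactSupport (g m) ∧
      tsupport (g m) ⊆ Ioo a b) ∧ (∀ m x, ‖g m x‖ ≤ C) ∧
      ∀ᵐ x ∂volume.restrict (Ioo a b), Tendsto (fun m ↦ g m x) atTop (𝓝 (f x)) := by
  obtain ⟨χ, hχ_smooth, hχ_cpt, hχ_supp, hχ_le, hχ_one⟩ :=
    exists_seq_contDiff_tsupport_subset_Ioo_eventually_eq_one hab (n := n)
  obtain ⟨h, hh_smooth, hh_le, hh_lim⟩ := hf.exists_seq_contDiff_tendsto_ae_of_norm_le (n := n) hC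
  refine ⟨fun m ↦ χ m • h m, fun m ↦ ⟨(hχ_smooth m).smul (hh_smooth m), (hχ_cpt m).smul_right,
    (tsupport_smul_subset_left _ _).trans (hχ_supp m)⟩, fun m x ↦ ?_, ?_⟩
  · calc ‖χ m x • h m x‖ = ‖χ m x‖ * ‖h m x‖ := norm_smul _ _
      _ ≤ 1 * C := mul_le_mul (hχ_le m x) (hh_le m x) (norm_nonneg _) zero_le_one
      _ = C := one_mul C
  · filter_upwards [ae_restrict_of_ae hh_lim, ae_restrict_mem measurableSet_Ioo] with x hx hmem
    refine hx.congr' ?_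
    filter_upwards [hχ_one x hmem] with m hm
    simp [hm]

section DualRateFunctional

variable {α ℛ : Type*} [MeasurableSpace α] [Fintype ℛ]

noncomputable def dualRateFunctional (μ : Measure α) (j k ζ : α → ℛ → ℝ) : ℝ :=
  ∫ t, ∑ r, (ζ t r * j t r - k t r * (exp (ζ t r) - 1)) ∂μ

theorem tendsto_dualRateFunctional {μ : Measure α} {j k : α → ℛ → ℝ}
    (hj : Integrable j μ) (hk : Integrable k μ) {ζ : ℕ → α → ℛ → ℝ} {ζ₀ : α → ℛ → ℝ} {C : ℝ}
    (hζ : ∀ n, AEStronglyMeasurable (ζ n) μ) (hC : ∀ n, ∀ᵐ t ∂μ, ‖ζ n t‖ ≤ C)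
    (hlim : ∀ᵐ t ∂μ, Tendsto (fun n ↦ ζ n t) atTop (𝓝 (ζ₀ t))) :
    Tendsto (fun n ↦ dualRateFunctional μ j k (ζ n)) atTop
      (𝓝 (dualRateFunctional μ j k ζ₀)) := by
  have hΦ : Continuous fun p : (ℛ → ℝ) × (ℛ → ℝ) × (ℛ → ℝ) ↦
      ∑ r, (p.1 r * p.2.1 r - p.2.2 r * (exp (p.1 r) - 1)) := by fun_prop
  refine tendsto_integral_of_dominated_convergence
    (fun t ↦ ∑ r, (C * |j t r| + (exp C + 1) * |k t r|)) (fun n ↦ ?_) ?_ (fun n ↦ ?_) ?_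
  · exact hΦ.comp_aestronglyMeasurable ((hζ n).prodMk (hj.1.prodMk hk.1))
  · exact integrable_finsetSum _ fun r _ ↦
      ((hj.eval r).abs.const_mul C).add ((hk.eval r).abs.const_mul _)
  · filter_upwards [hC n] with t ht
    refine (norm_sum_le _ _).trans (Finset.sum_le_sum fun r _ ↦ ?_)
    exact abs_mul_sub_mul_exp_sub_one_le ((norm_le_pi_norm (ζ n t) r).trans ht)
  · filter_upwards [hlim] with t ht
    have hcomp := (hΦ.tendsto (ζ₀ t, j t, k t)).comp
      (ht.prodMk_nhds (tendsto_const_nhds (x := (j t, k t))))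
    exact hcomp

end DualRateFunctional

theorem exists_seq_contDiff_tendsto_dualRateFunctional {ℛ : Type*} [Fintype ℛ] {a b : ℝ}
    (hab : a < b) {j k ζ : ℝ → ℛ → ℝ} (hj : IntegrableOn j (Ioo a b)) (hk : IntegrableOn k (Ioo a b))
    (hζ : Measurable ζ) {C : ℝ} (hC : ∀ t, ‖ζ t‖ ≤ C) :
    ∃ ψ : ℕ → ℝ → ℛ → ℝ, (∀ m, ContDiff ℝ 1 (ψ m) ∧ HasCompactSupport (ψ m) ∧
      tsupport (ψ m) ⊆ Ioo a b) ∧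
      Tendsto (fun m ↦ dualRateFunctional (volume.restrict (Ioo a b)) j k (ψ m)) atTop
        (𝓝 (dualRateFunctional (volume.restrict (Ioo a b)) j k ζ)) := by
  obtain ⟨ψ, hψ, hψ_le, hψ_lim⟩ :=
    exists_seq_contDiff_tsupport_subset_Ioo_tendsto_ae hab (n := 1) hζ.aestronglyMeasurable hC
  exact ⟨ψ, hψ, tendsto_dualRateFunctional hj hk
    (fun m ↦ (hψ m).1.continuous.aestronglyMeasurable)
    (fun m ↦ ae_of_all _ (hψ_le m)) hψ_lim⟩

theorem stmt7_general
    {ℛ : Type*} [Fintype ℛ]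
    (T : ℝ) (hT : 0 < T)
    (j k : ℝ → ℛ → ℝ)
    (hj_int : IntegrableOn j (Set.Ioo 0 T))
    (hk_int : IntegrableOn k (Set.Ioo 0 T)) :
    (⨆ ζ : {ζ : ℝ → ℛ → ℝ //
        ContDiff ℝ 1 ζ ∧ HasCompactSupport ζ ∧ tsupport ζ ⊆ Set.Ioo 0 T},
      ENNReal.ofReal (∫ t in Set.Ioo (0:ℝ) T,
        ∑ r, ((ζ : ℝ → ℛ → ℝ) t r * j t r
          - k t r * (Real.exp ((ζ : ℝ → ℛ → ℝ) t r) - 1))))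
    = ⨆ ζ : {ζ : ℝ → ℛ → ℝ // Measurable ζ ∧ ∃ C : ℝ, ∀ t r, |ζ t r| ≤ C},
      ENNReal.ofReal (∫ t in Set.Ioo (0:ℝ) T,
        ∑ r, ((ζ : ℝ → ℛ → ℝ) t r * j t r
          - k t r * (Real.exp ((ζ : ℝ → ℛ → ℝ) t r) - 1))) := by
  apply le_antisymm
  · refine iSup_le fun ⟨ζ, hζ, hζ_cpt, _⟩ ↦ ?_
    have hζ_bdd := exists_norm_le_iff_exists_abs_le.1
      (hζ_cpt.exists_bound_of_continuous hζ.continuous)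
    exact le_iSup_of_le ⟨ζ, hζ.continuous.measurable, hζ_bdd⟩ le_rfl
  · refine iSup_le fun ⟨ζ, hζ, hζ_bdd⟩ ↦ ?_
    obtain ⟨C, hC⟩ := exists_norm_le_iff_exists_abs_le.2 hζ_bdd
    obtain ⟨ψ, hψ, hψ_lim⟩ :=
      exists_seq_contDiff_tendsto_dualRateFunctional hT hj_int hk_int hζ hC
    exact le_of_tendsto' (ENNReal.tendsto_ofReal hψ_lim)
      fun m ↦ le_iSup_of_le ⟨ψ m, hψ m⟩ le_rfl

/-- for measurable, componentwise integrable `j, k : (0,T) → ℝ^ℛ₊`,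
the supremum over `ζ ∈ C¹_c((0,T); ℝ^ℛ)` of
`∫₀ᵀ [ζ(t)·j(t) − Σ_r k^r(t)(e^{ζ^r(t)} − 1)] dt` equals the supremum over bounded
measurable (`L^∞`) `ζ` of the same expression. -/
theorem stmt7
    {ℛ : Type*} [Fintype ℛ]
    (T : ℝ) (hT : 0 < T)
    (j k : ℝ → ℛ → ℝ)
    (hj_meas : Measurable j) (hk_meas : Measurable k)
    (hj_nonneg : ∀ t ∈ Set.Ioo (0:ℝ) T, ∀ r, 0 ≤ j t r)
    (hk_nonneg : ∀ t ∈ Set.Ioo (0:ℝ) T, ∀ r, 0 ≤ k t r)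
    (hj_int : IntegrableOn j (Set.Ioo 0 T))
    (hk_int : IntegrableOn k (Set.Ioo 0 T)) :
    (⨆ ζ : {ζ : ℝ → ℛ → ℝ //
        ContDiff ℝ 1 ζ ∧ HasCompactSupport ζ ∧ tsupport ζ ⊆ Set.Ioo 0 T},
      ENNReal.ofReal (∫ t in Set.Ioo (0:ℝ) T,
        ∑ r, ((ζ : ℝ → ℛ → ℝ) t r * j t r
          - k t r * (Real.exp ((ζ : ℝ → ℛ → ℝ) t r) - 1))))
    = ⨆ ζ : {ζ : ℝ → ℛ → ℝ // Measurable ζ ∧ ∃ C : ℝ, ∀ t r, |ζ t r| ≤ C},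
      ENNReal.ofReal (∫ t in Set.Ioo (0:ℝ) T,
        ∑ r, ((ζ : ℝ → ℛ → ℝ) t r * j t r
          - k t r * (Real.exp ((ζ : ℝ → ℛ → ℝ) t r) - 1))) :=
  stmt7_general T hT j k hj_int hk_int
end

section
/- Let k̄ be continuous and bounded. Let (c_n,w_n) and (c,w) be pairs in W^{1,1}((0,T); ℝ^𝒴_+ × ℝ^ℛ_+) with ẇ_n ≥ 0, ẇ ≥ 0 a.e., and suppose (c_n,w_n) → (c,w) in the hybrid sense as n → ∞. Then liminf_{n→∞} J(c_n,w_n) ≥ J(c,w). -/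
/-!
The proof is by duality. For `j, k ≥ 0`, `s(j|k) = sup_b (b j - (e^b - 1) k)`, so `J(c, w)` is
the supremum, over continuous test functions `φ` with compact support in `(0, T)`, of
`∫ Σ_r (φ^r ẇ^r - (e^{φ^r} - 1) k̄^r(c))`. Each of these functionals is continuous along hybrid
convergence: the linear term by the vague convergence of `ẇₙ`, the other one by dominated
convergence, since `cₙ → c` in measure and `k̄` is bounded and continuous. A supremum of continuous
functionals is lower semicontinuous. The supremum is approached by truncating the pointwise
maximiser `log (ẇ / k̄)` to `[-m, m]` on compact subintervals and approximating it, in an `L¹` norm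
weighted by `|ẇ| + e^m k̄`, by continuous compactly supported functions.
-/

open MeasureTheory Real Set Filter Topology

open scoped ENNReal

/-- The Fenchel–Young pairing of the entropy: `bes j k = ⨆ b, besDual b j k` for `j, k ≥ 0`. -/
noncomputable def besDual (b j k : ℝ) : ℝ := b * j - (exp b - 1) * k

/-- The maximiser of `besDual · j k` over `[-m, m]`. -/
noncomputable def besArg (m j k : ℝ) : ℝ :=
  if j = 0 then -m else if k = 0 then m else max (-m) (min m (log (j / k)))

lemma besDual_le_add_mul (b b' j : ℝ) {k : ℝ} (hk : 0 ≤ k) :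
    besDual b j k ≤ besDual b' j k + (b - b') * (j - exp b' * k) := by
  have h : exp b' * (b - b' + 1) ≤ exp b := by
    simpa [← exp_add] using mul_le_mul_of_nonneg_left (add_one_le_exp (b - b')) (exp_pos b').le
  unfold besDual
  nlinarith [mul_le_mul_of_nonneg_right h hk]

lemma besDual_log_div {j k : ℝ} (hj : 0 < j) (hk : 0 < k) :
    besDual (log (j / k)) j k = j * log (j / k) - j + k := by
  rw [besDual, exp_log (by positivity)]
  field_simp
  ring

lemma ofReal_besDual_le_bes (b : ℝ) {j k : ℝ} (hj : 0 ≤ j) (hk : 0 ≤ k) :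
    ENNReal.ofReal (besDual b j k) ≤ bes j k := by
  rcases hj.eq_or_lt with rfl | hj
  · rw [bes, if_pos rfl, besDual]
    exact ENNReal.ofReal_le_ofReal (by nlinarith [exp_pos b])
  rcases hk.eq_or_lt with rfl | hk
  · simp [bes, hj.ne']
  rw [bes, if_neg hj.ne', if_neg hk.ne', ← besDual_log_div hj hk]
  refine ENNReal.ofReal_le_ofReal ((besDual_le_add_mul b (log (j / k)) j hk.le).trans_eq ?_)
  rw [exp_log (by positivity), div_mul_cancel₀ _ hk.ne', sub_self, mul_zero, add_zero]

lemma besArg_mem_Icc {m : ℝ} (hm : 0 ≤ m) (j k : ℝ) : besArg m j k ∈ Icc (-m) m := by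
  unfold besArg
  split_ifs
  · exact ⟨le_rfl, by linarith⟩
  · exact ⟨by linarith, le_rfl⟩
  · exact ⟨le_max_left _ _, max_le (by linarith) (min_le_left _ _)⟩

lemma besDual_le_besDual_besArg {b m j k : ℝ} (hb : b ∈ Icc (-m) m) (hj : 0 ≤ j) (hk : 0 ≤ k) :
    besDual b j k ≤ besDual (besArg m j k) j k := by
  refine (besDual_le_add_mul b (besArg m j k) j hk).trans (add_le_of_nonpos_right ?_)
  obtain ⟨hbl, hbu⟩ := hb
  rcases hj.eq_or_lt with rfl | hj
  · rw [besArg, if_pos rfl]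
    exact mul_nonpos_of_nonneg_of_nonpos (by linarith) (by nlinarith [exp_pos (-m)])
  rcases hk.eq_or_lt with rfl | hk
  · rw [besArg, if_neg hj.ne', if_pos rfl]
    exact mul_nonpos_of_nonpos_of_nonneg (by linarith) (by simpa using hj.le)
  have hy : exp (log (j / k)) * k = j := by rw [exp_log (by positivity), div_mul_cancel₀ _ hk.ne']
  rw [besArg, if_neg hj.ne', if_neg hk.ne']
  rcases le_total (log (j / k)) (-m) with hl | hl
  · rw [min_eq_right (by linarith), max_eq_left hl]
    have := mul_le_mul_of_nonneg_right (exp_le_exp.mpr hl) hk.le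
    exact mul_nonpos_of_nonneg_of_nonpos (by linarith) (by linarith)
  rcases le_total m (log (j / k)) with hu | hu
  · rw [min_eq_left hu, max_eq_right (by linarith)]
    have := mul_le_mul_of_nonneg_right (exp_le_exp.mpr hu) hk.le
    exact mul_nonpos_of_nonpos_of_nonneg (by linarith) (by linarith)
  · rw [min_eq_right hu, max_eq_right hl, hy, sub_self, mul_zero]

lemma besDual_besArg_nonneg {m j k : ℝ} (hm : 0 ≤ m) (hj : 0 ≤ j) (hk : 0 ≤ k) :
    0 ≤ besDual (besArg m j k) j k := by
  simpa [besDual] using besDual_le_besDual_besArg (b := 0) ⟨by linarith, hm⟩ hj hk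

lemma tendsto_ofReal_besDual_besArg {j k : ℝ} (hj : 0 ≤ j) (hk : 0 ≤ k) :
    Tendsto (fun m : ℕ => ENNReal.ofReal (besDual (besArg m j k) j k)) atTop (𝓝 (bes j k)) := by
  rcases hj.eq_or_lt with rfl | hj
  · have h : Tendsto (fun m : ℕ => (1 - exp (-m)) * k) atTop (𝓝 ((1 - 0) * k)) :=
      ((tendsto_exp_neg_atTop_nhds_zero.comp tendsto_natCast_atTop_atTop).const_sub 1).mul_const k
    simp only [bes, besArg, besDual, if_true, mul_zero, zero_sub]
    refine (ENNReal.continuous_ofReal.tendsto _).comp ((by simpa using h :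
      Tendsto (fun m : ℕ => (1 - exp (-m)) * k) atTop (𝓝 k)).congr fun m => ?_)
    ring
  rcases hk.eq_or_lt with rfl | hk
  · simp only [bes, besArg, besDual, hj.ne', if_false, if_true, mul_zero, sub_zero]
    exact ENNReal.tendsto_ofReal_atTop.comp (tendsto_natCast_atTop_atTop.atTop_mul_const hj)
  rw [bes, if_neg hj.ne', if_neg hk.ne', ← besDual_log_div hj hk]
  refine tendsto_const_nhds.congr' ?_
  filter_upwards [eventually_ge_atTop ⌈|log (j / k)|⌉₊] with m hm
  obtain ⟨hl, hu⟩ := abs_le.mp ((Nat.le_ceil _).trans (Nat.cast_le.mpr hm))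
  rw [besArg, if_neg hj.ne', if_neg hk.ne', min_eq_right hu, max_eq_right hl]

lemma measurable_besArg (m : ℝ) : Measurable fun p : ℝ × ℝ => besArg m p.1 p.2 := by
  unfold besArg
  refine Measurable.ite (measurableSet_eq_fun measurable_fst measurable_const) measurable_const
    (Measurable.ite (measurableSet_eq_fun measurable_snd measurable_const) measurable_const ?_)
  exact measurable_const.max (measurable_const.min (measurable_fst.div measurable_snd).log)

lemma abs_besDual_sub_besDual_le {b b' m j k : ℝ} (hb : b ≤ m) (hb' : b' ≤ m) (hk : 0 ≤ k) :
    |besDual b j k - besDual b' j k| ≤ |b - b'| * (|j| + exp m * k) := by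
  have key : ∀ x y, y ≤ m → besDual x j k - besDual y j k ≤ |x - y| * (|j| + exp m * k) := by
    intro x y hy
    have hexp := mul_le_mul_of_nonneg_right (exp_le_exp.mpr hy) hk
    calc besDual x j k - besDual y j k ≤ (x - y) * (j - exp y * k) := by
          linarith [besDual_le_add_mul x y j hk]
      _ ≤ |x - y| * |j - exp y * k| := by rw [← abs_mul]; exact le_abs_self _
      _ ≤ |x - y| * (|j| + exp m * k) := by
          gcongr
          refine (abs_sub _ _).trans ?_
          rw [abs_of_nonneg (by positivity : 0 ≤ exp y * k)]
          linarith
  rw [abs_sub_le_iff]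
  exact ⟨key b b' hb', abs_sub_comm b b' ▸ key b' b hb⟩

lemma abs_exp_sub_one_mul_le {b B k K : ℝ} (hb : |b| ≤ B) (hk : k ∈ Icc 0 K) :
    |(exp b - 1) * k| ≤ (exp B + 1) * K := by
  rw [abs_mul, abs_of_nonneg hk.1]
  have hB : exp b ≤ exp B := exp_le_exp.mpr (abs_le.mp hb).2
  refine mul_le_mul ?_ hk.2 hk.1 (by positivity)
  exact abs_le.mpr ⟨by linarith [exp_pos b, exp_pos B], by linarith⟩

lemma abs_sum_besDual_sub_le {ℛ : Type*} [Fintype ℛ] {b b' j k : ℛ → ℝ} {m : ℝ}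
    (hb : ∀ r, b r ≤ m) (hb' : ∀ r, b' r ≤ m) (hk : ∀ r, 0 ≤ k r) :
    |∑ r, besDual (b r) (j r) (k r) - ∑ r, besDual (b' r) (j r) (k r)|
      ≤ ‖b - b'‖ * ∑ r, (|j r| + exp m * k r) := by
  rw [← Finset.sum_sub_distrib, Finset.mul_sum]
  refine (Finset.abs_sum_le_sum_abs _ _).trans (Finset.sum_le_sum fun r _ => ?_)
  refine (abs_besDual_sub_besDual_le (hb r) (hb' r) (hk r)).trans ?_
  exact mul_le_mul_of_nonneg_right (norm_le_pi_norm (b - b') r)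
    (add_nonneg (abs_nonneg _) (mul_nonneg (exp_pos m).le (hk r)))

section Integrals

variable {α ℛ : Type*} [MeasurableSpace α] [Fintype ℛ] {μ : Measure α}

lemma integrable_sum_mul {φ u : α → ℛ → ℝ} (hφ : AEStronglyMeasurable φ μ) {B : ℝ}
    (hφB : ∀ x r, |φ x r| ≤ B) (hu : Integrable u μ) :
    Integrable (fun x => ∑ r, φ x r * u x r) μ :=
  integrable_finsetSum _ fun r _ => (hu.eval r).bdd_mul
    ((continuous_apply r).comp_aestronglyMeasurable hφ) (.of_forall fun x => hφB x r)

lemma integrable_sum_exp_sub_one_mul [IsFiniteMeasure μ] {φ κ : α → ℛ → ℝ}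
    (hφ : AEStronglyMeasurable φ μ) {B : ℝ} (hφB : ∀ x r, |φ x r| ≤ B)
    (hκ : AEStronglyMeasurable κ μ) {K : ℝ} (hκK : ∀ᵐ x ∂μ, ∀ r, κ x r ∈ Icc 0 K) :
    Integrable (fun x => ∑ r, (exp (φ x r) - 1) * κ x r) μ :=
  integrable_finsetSum _ fun r _ => .of_bound
    (((continuous_exp.comp_aestronglyMeasurable
      ((continuous_apply r).comp_aestronglyMeasurable hφ)).sub aestronglyMeasurable_const).mul
      ((continuous_apply r).comp_aestronglyMeasurable hκ)) _
    (hκK.mono fun x hx => abs_exp_sub_one_mul_le (hφB x r) (hx r))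

lemma sum_besDual (b j k : ℛ → ℝ) :
    ∑ r, besDual (b r) (j r) (k r) = ∑ r, b r * j r - ∑ r, (exp (b r) - 1) * k r := by
  simp only [besDual, Finset.sum_sub_distrib]

lemma integrable_sum_besDual [IsFiniteMeasure μ] {φ u κ : α → ℛ → ℝ}
    (hφ : AEStronglyMeasurable φ μ) {B : ℝ} (hφB : ∀ x r, |φ x r| ≤ B) (hu : Integrable u μ)
    (hκ : AEStronglyMeasurable κ μ) {K : ℝ} (hκK : ∀ᵐ x ∂μ, ∀ r, κ x r ∈ Icc 0 K) :
    Integrable (fun x => ∑ r, besDual (φ x r) (u x r) (κ x r)) μ := by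
  simp only [sum_besDual]
  exact (integrable_sum_mul hφ hφB hu).sub (integrable_sum_exp_sub_one_mul hφ hφB hκ hκK)

lemma ofReal_integral_le_lintegral_ofReal (f : α → ℝ) :
    ENNReal.ofReal (∫ x, f x ∂μ) ≤ ∫⁻ x, ENNReal.ofReal (f x) ∂μ := by
  by_cases hf : Integrable f μ
  · rw [integral_eq_lintegral_pos_part_sub_lintegral_neg_part hf]
    exact (ENNReal.ofReal_le_ofReal (sub_le_self _ ENNReal.toReal_nonneg)).trans
      ENNReal.ofReal_toReal_le
  · simp [integral_undef hf]

lemma ofReal_integral_sum_besDual_le {φ u κ : α → ℛ → ℝ} (hu : ∀ᵐ x ∂μ, ∀ r, 0 ≤ u x r)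
    (hκ : ∀ᵐ x ∂μ, ∀ r, 0 ≤ κ x r) :
    ENNReal.ofReal (∫ x, ∑ r, besDual (φ x r) (u x r) (κ x r) ∂μ)
      ≤ ∫⁻ x, ∑ r, bes (u x r) (κ x r) ∂μ := by
  refine (ofReal_integral_le_lintegral_ofReal _).trans (lintegral_mono_ae ?_)
  filter_upwards [hu, hκ] with x hux hκx
  exact (Finset.le_sum_of_subadditive _ ENNReal.ofReal_zero.le
      (fun _ _ => ENNReal.ofReal_add_le) _ _).trans
    (Finset.sum_le_sum fun r _ => ofReal_besDual_le_bes _ (hux r) (hκx r))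

lemma tendsto_integral_comp_of_tendstoInMeasure [IsFiniteMeasure μ] {E : Type*}
    [PseudoEMetricSpace E] {f : ℕ → α → E} {g : α → E} (hfg : TendstoInMeasure μ f atTop g)
    {S : Set E} (hfS : ∀ n, ∀ᵐ x ∂μ, f n x ∈ S) (hgS : ∀ᵐ x ∂μ, g x ∈ S) {Φ : α → E → ℝ}
    (hΦ : ∀ x, ContinuousOn (Φ x) S) (hΦf : ∀ n, AEStronglyMeasurable (fun x => Φ x (f n x)) μ)
    {C : ℝ} (hC : ∀ n, ∀ᵐ x ∂μ, |Φ x (f n x)| ≤ C) :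
    Tendsto (fun n => ∫ x, Φ x (f n x) ∂μ) atTop (𝓝 (∫ x, Φ x (g x) ∂μ)) := by
  refine tendsto_of_subseq_tendsto fun ns hns => ?_
  obtain ⟨ms, -, hms⟩ := (hfg.comp hns).exists_seq_tendsto_ae
  refine ⟨ms, tendsto_integral_of_dominated_convergence (fun _ => C) (fun i => hΦf _)
    (integrable_const C) (fun i => hC _) ?_⟩
  filter_upwards [hms, hgS, ae_all_iff.mpr fun i => hfS (ns (ms i))] with x hx hgx hfx
  exact (hΦ x (g x) hgx).tendsto.comp (tendsto_nhdsWithin_iff.mpr ⟨hx, .of_forall hfx⟩)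

end Integrals

section LowerBound

variable {α ℛ : Type*} [MeasurableSpace α] [Fintype ℛ] {μ : Measure α} [IsFiniteMeasure μ]

theorem ofReal_integral_sum_besDual_le_liminf {E : Type*} [PseudoEMetricSpace E] {S : Set E}
    {k : E → ℛ → ℝ} (hk : ContinuousOn k S) {K : ℝ} (hkK : ∀ e ∈ S, ∀ r, k e r ∈ Icc 0 K)
    {f : ℕ → α → E} {g : α → E} (hfg : TendstoInMeasure μ f atTop g)
    (hfS : ∀ n, ∀ᵐ x ∂μ, f n x ∈ S) (hgS : ∀ᵐ x ∂μ, g x ∈ S)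
    (hkf : ∀ n, AEStronglyMeasurable (fun x => k (f n x)) μ)
    (hkg : AEStronglyMeasurable (fun x => k (g x)) μ)
    {u : ℕ → α → ℛ → ℝ} {u₀ : α → ℛ → ℝ} (hu : ∀ n, Integrable (u n) μ)
    (hu0 : ∀ n, ∀ᵐ x ∂μ, ∀ r, 0 ≤ u n x r) (hu₀ : Integrable u₀ μ)
    {φ : α → ℛ → ℝ} (hφ : AEStronglyMeasurable φ μ) {B : ℝ} (hφB : ∀ x r, |φ x r| ≤ B)
    (hφu : Tendsto (fun n => ∫ x, ∑ r, φ x r * u n x r ∂μ) atTop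
      (𝓝 (∫ x, ∑ r, φ x r * u₀ x r ∂μ))) :
    ENNReal.ofReal (∫ x, ∑ r, besDual (φ x r) (u₀ x r) (k (g x) r) ∂μ)
      ≤ atTop.liminf fun n => ∫⁻ x, ∑ r, bes (u n x r) (k (f n x) r) ∂μ := by
  have hkfK : ∀ n, ∀ᵐ x ∂μ, ∀ r, k (f n x) r ∈ Icc 0 K := fun n =>
    (hfS n).mono fun x hx => hkK _ hx
  have hkgK : ∀ᵐ x ∂μ, ∀ r, k (g x) r ∈ Icc 0 K := hgS.mono fun x hx => hkK _ hx
  have hsplit : ∀ {u κ : α → ℛ → ℝ}, Integrable u μ → AEStronglyMeasurable κ μ →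
      (∀ᵐ x ∂μ, ∀ r, κ x r ∈ Icc 0 K) →
      ∫ x, ∑ r, besDual (φ x r) (u x r) (κ x r) ∂μ
        = ∫ x, ∑ r, φ x r * u x r ∂μ - ∫ x, ∑ r, (exp (φ x r) - 1) * κ x r ∂μ := by
    intro u κ hu hκ hκK
    simp only [sum_besDual]
    exact integral_sub (integrable_sum_mul hφ hφB hu)
      (integrable_sum_exp_sub_one_mul hφ hφB hκ hκK)
  have hexp : Tendsto (fun n => ∫ x, ∑ r, (exp (φ x r) - 1) * k (f n x) r ∂μ) atTop
      (𝓝 (∫ x, ∑ r, (exp (φ x r) - 1) * k (g x) r ∂μ)) := by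
    refine tendsto_integral_comp_of_tendstoInMeasure hfg hfS hgS
      (fun x => continuousOn_finsetSum _ fun r _ =>
        continuousOn_const.mul ((continuous_apply r).comp_continuousOn hk))
      (fun n => (integrable_sum_exp_sub_one_mul hφ hφB (hkf n) (hkfK n)).aestronglyMeasurable)
      (C := Fintype.card ℛ * ((exp B + 1) * K)) fun n => (hkfK n).mono fun x hx => ?_
    refine (Finset.abs_sum_le_sum_abs _ _).trans ?_
    refine (Finset.sum_le_sum fun r _ => abs_exp_sub_one_mul_le (hφB x r) (hx r)).trans_eq ?_
    rw [Finset.sum_const, nsmul_eq_mul, Finset.card_univ]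
  have hlim := hφu.sub hexp
  rw [← hsplit hu₀ hkg hkgK] at hlim
  simp only [← hsplit (hu _) (hkf _) (hkfK _)] at hlim
  rw [← ((ENNReal.continuous_ofReal.tendsto _).comp hlim).liminf_eq]
  exact liminf_le_liminf (.of_forall fun n =>
    ofReal_integral_sum_besDual_le (hu0 n) ((hkfK n).mono fun x hx r => (hx r).1))

end LowerBound

lemma abs_clamp_sub_le {m a : ℝ} (ha : |a| ≤ m) (x : ℝ) :
    |max (-m) (min m x) - a| ≤ |x - a| := by
  rw [abs_le] at ha
  grind

theorem exists_continuous_eLpNorm_sub_le {X ι : Type*} [TopologicalSpace X] [NormalSpace X]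
    [R1Space X] [LocallyCompactSpace X] [MeasurableSpace X] [BorelSpace X] [Fintype ι]
    (ν : Measure X) [IsFiniteMeasure ν] [ν.Regular] {C U : Set X} (hC : IsCompact C)
    (hU : IsOpen U) (hCU : C ⊆ U) {m : ℝ} (hm : 0 ≤ m) {β : X → ι → ℝ}
    (hβ : AEStronglyMeasurable β ν) (hβm : ∀ x i, |β x i| ≤ m) (hβC : ∀ x ∉ C, β x = 0)
    {ε : ℝ≥0∞} (hε : ε ≠ 0) :
    ∃ ψ : X → ι → ℝ, Continuous ψ ∧ HasCompactSupport ψ ∧ tsupport ψ ⊆ U ∧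
      (∀ x i, |ψ x i| ≤ m) ∧ eLpNorm (β - ψ) 1 ν ≤ ε := by
  have hβm' : ∀ x, ‖β x‖ ≤ m := fun x => (pi_norm_le_iff_of_nonneg hm).mpr (hβm x)
  have hβL : MemLp β 1 ν := .of_bound hβ m (.of_forall hβm')
  obtain ⟨g, -, hβg, hg, -⟩ := hβL.exists_hasCompactSupport_eLpNorm_sub_le ENNReal.one_ne_top hε
  obtain ⟨χ, hχC, hχ, hχU, hχ01⟩ := exists_continuousMap_one_of_isCompact_subset_isOpen hC hU hCU
  -- Clamping `g` to `[-m, m]` and cutting it off outside `C` does not move it away from `β`.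
  set ψ : X → ι → ℝ := fun x => χ x • fun i => max (-m) (min m (g x i)) with hψ
  have hψχ : ∀ x i, |ψ x i| ≤ |max (-m) (min m (g x i))| := fun x i => by
    simpa [hψ, abs_mul, abs_of_nonneg (hχ01 x).1] using
      mul_le_mul_of_nonneg_right (hχ01 x).2 (abs_nonneg (max (-m) (min m (g x i))))
  refine ⟨ψ, ?_, .of_isClosed_subset hχ (isClosed_tsupport _) (tsupport_smul_subset_left _ _),
    (tsupport_smul_subset_left _ _).trans hχU, fun x i => ?_, ?_⟩
  · exact χ.continuous.smul (continuous_pi fun i =>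
      continuous_const.max (continuous_const.min ((continuous_apply i).comp hg)))
  · exact (hψχ x i).trans (abs_le.mpr ⟨le_max_left _ _, max_le (by linarith) (min_le_left _ _)⟩)
  refine (eLpNorm_mono fun x => ?_).trans hβg
  refine (pi_norm_le_iff_of_nonneg (norm_nonneg _)).mpr fun i => ?_
  refine le_trans ?_ (norm_le_pi_norm ((β - g) x) i)
  simp only [Pi.sub_apply, Real.norm_eq_abs]
  by_cases hx : x ∈ C
  · have : ψ x i = max (-m) (min m (g x i)) := by simp [hψ, hχC hx]
    rw [abs_sub_comm, this, abs_sub_comm (β x i)]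
    exact abs_clamp_sub_le (hβm x i) _
  · simp only [hβC x hx, Pi.zero_apply, zero_sub, abs_neg]
    exact (hψχ x i).trans (by simpa using abs_clamp_sub_le (abs_zero.trans_le hm) (g x i))

section Duality

variable {X ℛ : Type*} [MetricSpace X] [ProperSpace X] [MeasurableSpace X] [BorelSpace X]
  [Fintype ℛ] {μ : Measure X} [IsFiniteMeasure μ] {U : Set X} {v k : X → ℛ → ℝ} {K : ℝ}
  {L : ℝ≥0∞}

theorem ofReal_integral_sum_besDual_le_of_forall_continuous (hU : IsOpen U) {C : Set X}
    (hC : IsCompact C) (hCU : C ⊆ U) (hv : Integrable v μ) (hk : AEStronglyMeasurable k μ)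
    (hkK : ∀ᵐ x ∂μ, ∀ r, k x r ∈ Icc 0 K) {m : ℝ} (hm : 0 ≤ m) {β : X → ℛ → ℝ}
    (hβ : AEStronglyMeasurable β μ) (hβm : ∀ x r, |β x r| ≤ m) (hβC : ∀ x ∉ C, β x = 0)
    (hL : ∀ φ : X → ℛ → ℝ, Continuous φ → HasCompactSupport φ → tsupport φ ⊆ U →
      ENNReal.ofReal (∫ x, ∑ r, besDual (φ x r) (v x r) (k x r) ∂μ) ≤ L) :
    ENNReal.ofReal (∫ x, ∑ r, besDual (β x r) (v x r) (k x r) ∂μ) ≤ L := by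
  refine ENNReal.le_of_forall_pos_le_add fun ε hε _ => ?_
  -- The pairing is `W`-Lipschitz in `β`, so it suffices to approximate `β` in `L¹(W μ)`.
  set W : X → ℝ := fun x => ∑ r, (|v x r| + exp m * k x r)
  have hW : Integrable W μ := integrable_finsetSum _ fun r _ => (hv.eval r).abs.add
    ((Integrable.of_bound ((continuous_apply r).comp_aestronglyMeasurable hk) K
      (hkK.mono fun x hx => by simpa [abs_of_nonneg (hx r).1] using (hx r).2)).const_mul _)
  set ν := μ.withDensity fun x => ENNReal.ofReal (W x)
  have : IsFiniteMeasure ν := isFiniteMeasure_withDensity_ofReal hW.hasFiniteIntegral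
  obtain ⟨ψ, hψ, hψcs, hψU, hψm, hβψ⟩ := exists_continuous_eLpNorm_sub_le ν hC hU hCU hm
    (hβ.mono_ac (withDensity_absolutelyContinuous _ _)) hβm hβC (ε := ε) (by simpa using hε.ne')
  have hFβ := integrable_sum_besDual hβ hβm hv hk hkK
  have hFψ := integrable_sum_besDual hψ.aestronglyMeasurable hψm hv hk hkK
  have herr : ∫⁻ x, ‖∑ r, besDual (β x r) (v x r) (k x r)
      - ∑ r, besDual (ψ x r) (v x r) (k x r)‖ₑ ∂μ ≤ ε := calc
    _ ≤ ∫⁻ x, ‖β x - ψ x‖ₑ * ENNReal.ofReal (W x) ∂μ := by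
      refine lintegral_mono_ae (hkK.mono fun x hx => ?_)
      rw [Real.enorm_eq_ofReal_abs, ← ofReal_norm, ← ENNReal.ofReal_mul (norm_nonneg _)]
      exact ENNReal.ofReal_le_ofReal (abs_sum_besDual_sub_le (fun r => (abs_le.mp (hβm x r)).2)
        (fun r => (abs_le.mp (hψm x r)).2) fun r => (hx r).1)
    _ = eLpNorm (β - ψ) 1 ν := by
      rw [eLpNorm_one_eq_lintegral_enorm, lintegral_withDensity_eq_lintegral_mul₀
        hW.aemeasurable.ennreal_ofReal ((hβ.sub hψ.aestronglyMeasurable).enorm)]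
      simp only [Pi.mul_apply, Pi.sub_apply, mul_comm]
    _ ≤ ε := hβψ
  calc ENNReal.ofReal (∫ x, ∑ r, besDual (β x r) (v x r) (k x r) ∂μ)
      ≤ ENNReal.ofReal (∫ x, ∑ r, besDual (ψ x r) (v x r) (k x r) ∂μ)
        + ‖∫ x, (∑ r, besDual (β x r) (v x r) (k x r)
          - ∑ r, besDual (ψ x r) (v x r) (k x r)) ∂μ‖ₑ := by
        rw [integral_sub hFβ hFψ, Real.enorm_eq_ofReal_abs]
        refine (ENNReal.ofReal_le_ofReal ?_).trans ENNReal.ofReal_add_le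
        linarith [le_abs_self (∫ x, ∑ r, besDual (β x r) (v x r) (k x r) ∂μ
          - ∫ x, ∑ r, besDual (ψ x r) (v x r) (k x r) ∂μ)]
    _ ≤ L + ε := add_le_add (hL ψ hψ hψcs hψU) ((enorm_integral_le_lintegral_enorm _).trans herr)
theorem lintegral_sum_bes_le_of_forall_continuous (hU : IsOpen U) {C : ℕ → Set X}
    (hC : ∀ m, IsCompact (C m)) (hCU : ∀ m, C m ⊆ U) (hμC : ∀ᵐ x ∂μ, ∀ᶠ m in atTop, x ∈ C m)
    (hv : Integrable v μ) (hv0 : ∀ᵐ x ∂μ, ∀ r, 0 ≤ v x r) (hk : AEStronglyMeasurable k μ)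
    (hkK : ∀ᵐ x ∂μ, ∀ r, k x r ∈ Icc 0 K)
    (hL : ∀ φ : X → ℛ → ℝ, Continuous φ → HasCompactSupport φ → tsupport φ ⊆ U →
      ENNReal.ofReal (∫ x, ∑ r, besDual (φ x r) (v x r) (k x r) ∂μ) ≤ L) :
    ∫⁻ x, ∑ r, bes (v x r) (k x r) ∂μ ≤ L := by
  set β : ℕ → X → ℛ → ℝ := fun m => (C m).indicator fun x r => besArg m (v x r) (k x r)
    with hβ_def
  have hβ : ∀ m, AEStronglyMeasurable (β m) μ := fun m =>
    (aemeasurable_pi_lambda _ fun r => (measurable_besArg m).comp_aemeasurable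
      ((hv.eval r).aemeasurable.prodMk
        ((continuous_apply r).comp_aestronglyMeasurable hk).aemeasurable)).aestronglyMeasurable
      |>.indicator (hC m).measurableSet
  have hβm : ∀ (m : ℕ) x r, |β m x r| ≤ m := fun m x r => by
    by_cases hx : x ∈ C m
    · simpa [hβ_def, hx, abs_le] using besArg_mem_Icc (Nat.cast_nonneg m) (v x r) (k x r)
    · simp [hβ_def, hx]
  have hF : ∀ m, Integrable (fun x => ∑ r, besDual (β m x r) (v x r) (k x r)) μ := fun m =>
    integrable_sum_besDual (hβ m) (hβm m) hv hk hkK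
  have hF0 : ∀ m, 0 ≤ᵐ[μ] fun x => ∑ r, besDual (β m x r) (v x r) (k x r) := fun m => by
    filter_upwards [hv0, hkK] with x hvx hkx
    refine Finset.sum_nonneg fun r _ => ?_
    by_cases hx : x ∈ C m
    · simpa [hβ_def, hx] using besDual_besArg_nonneg (Nat.cast_nonneg m) (hvx r) (hkx r).1
    · simp [hβ_def, hx, besDual]
  have hFL : ∀ m : ℕ, ∫⁻ x, ENNReal.ofReal (∑ r, besDual (β m x r) (v x r) (k x r)) ∂μ ≤ L :=
    fun m => by
      rw [← ofReal_integral_eq_lintegral_ofReal (hF m) (hF0 m)]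
      exact ofReal_integral_sum_besDual_le_of_forall_continuous hU (hC m) (hCU m) hv hk hkK
        (Nat.cast_nonneg m) (hβ m) (hβm m) (fun x hx => indicator_of_notMem hx _) hL
  have hlim : ∀ᵐ x ∂μ, Tendsto (fun m => ENNReal.ofReal (∑ r, besDual (β m x r) (v x r) (k x r)))
      atTop (𝓝 (∑ r, bes (v x r) (k x r))) := by
    filter_upwards [hμC, hv0, hkK] with x hxC hvx hkx
    refine (tendsto_finsetSum _ fun r _ =>
      tendsto_ofReal_besDual_besArg (hvx r) (hkx r).1).congr' ?_
    filter_upwards [hxC] with m hm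
    simp only [hβ_def, indicator_of_mem hm]
    exact (ENNReal.ofReal_sum_of_nonneg fun r _ =>
      besDual_besArg_nonneg (Nat.cast_nonneg m) (hvx r) (hkx r).1).symm
  calc ∫⁻ x, ∑ r, bes (v x r) (k x r) ∂μ
      = ∫⁻ x, atTop.liminf (fun m => ENNReal.ofReal (∑ r, besDual (β m x r) (v x r) (k x r))) ∂μ :=
        lintegral_congr_ae (hlim.mono fun x hx => hx.liminf_eq.symm)
    _ ≤ atTop.liminf fun m => ∫⁻ x, ENNReal.ofReal (∑ r, besDual (β m x r) (v x r) (k x r)) ∂μ :=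
        lintegral_liminf_le' fun m => (hF m).aemeasurable.ennreal_ofReal
    _ ≤ L := liminf_le_of_frequently_le' (.of_forall hFL)

end Duality

lemma continuousOn_Icc_of_eq_add_integral {E : Type*} [NormedAddCommGroup E] [NormedSpace ℝ E]
    {T : ℝ} (hT : 0 ≤ T) {f g : ℝ → E} (hg : IntegrableOn g (Ioo 0 T))
    (hf : ∀ t ∈ Icc 0 T, f t = f 0 + ∫ s in 0..t, g s) : ContinuousOn f (Icc 0 T) := by
  have h := intervalIntegral.continuousOn_primitive_interval (μ := volume) (a := 0) (b := T)
    (f := g) (by rwa [uIcc_of_le hT, integrableOn_Icc_iff_integrableOn_Ioo])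
  rw [uIcc_of_le hT] at h
  exact (continuousOn_const.add h).congr hf

lemma eventually_mem_Icc_of_mem_Ioo {a b x : ℝ} (hx : x ∈ Ioo a b) :
    ∀ᶠ m : ℕ in atTop, x ∈ Icc (a + 1 / (m + 1)) (b - 1 / (m + 1)) := by
  filter_upwards [tendsto_one_div_add_atTop_nhds_zero_nat.eventually
    (gt_mem_nhds (lt_min (sub_pos.mpr hx.1) (sub_pos.mpr hx.2)))] with m hm
  exact ⟨by linarith [min_le_left (x - a) (b - x)], by linarith [min_le_right (x - a) (b - x)]⟩

lemma tendstoInMeasure_of_tendsto_integral_norm_sub {α E : Type*} [MeasurableSpace α]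
    {μ : Measure α} [NormedAddCommGroup E] {f : ℕ → α → E} {g : α → E}
    (hf : ∀ n, AEStronglyMeasurable (f n) μ) (hg : AEStronglyMeasurable g μ)
    (hfg : ∀ n, Integrable (fun x => ‖f n x - g x‖) μ)
    (h : Tendsto (fun n => ∫ x, ‖f n x - g x‖ ∂μ) atTop (𝓝 0)) :
    TendstoInMeasure μ f atTop g := by
  refine tendstoInMeasure_of_tendsto_eLpNorm one_ne_zero hf hg ?_
  simp_rw [eLpNorm_one_eq_lintegral_enorm, Pi.sub_apply, ← ofReal_norm,
    ← ofReal_integral_eq_lintegral_ofReal (hfg _) (.of_forall fun x => norm_nonneg _)]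
  simpa using ENNReal.tendsto_ofReal h

lemma tendstoInMeasure_of_tendsto_integral_norm_add_norm {E F : Type*} [NormedAddCommGroup E]
    [NormedAddCommGroup F] {T : ℝ} {f : ℕ → ℝ → E} {g : ℝ → E} {f' : ℕ → ℝ → F} {g' : ℝ → F}
    (hf : ∀ n, ContinuousOn (f n) (Icc 0 T)) (hg : ContinuousOn g (Icc 0 T))
    (hf' : ∀ n, ContinuousOn (f' n) (Icc 0 T)) (hg' : ContinuousOn g' (Icc 0 T))
    (h : Tendsto (fun n => ∫ t in Ioo 0 T, (‖f n t - g t‖ + ‖f' n t - g' t‖)) atTop (𝓝 0)) :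
    TendstoInMeasure (volume.restrict (Ioo 0 T)) f atTop g := by
  have hint : ∀ {u : ℝ → ℝ}, ContinuousOn u (Icc 0 T) → IntegrableOn u (Ioo 0 T) :=
    fun hu => hu.integrableOn_Icc.mono_set Ioo_subset_Icc_self
  refine tendstoInMeasure_of_tendsto_integral_norm_sub
    (fun n => ((hf n).mono Ioo_subset_Icc_self).aestronglyMeasurable measurableSet_Ioo)
    ((hg.mono Ioo_subset_Icc_self).aestronglyMeasurable measurableSet_Ioo)
    (fun n => hint ((hf n).sub hg).norm)
    (squeeze_zero (fun n => integral_nonneg fun t => norm_nonneg _) (fun n => ?_) h)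
  exact integral_mono (hint ((hf n).sub hg).norm)
    ((hint ((hf n).sub hg).norm).add (hint ((hf' n).sub hg').norm))
    fun t => le_add_of_nonneg_right (norm_nonneg _)

theorem stmt8_general
    {𝒴 ℛ : Type*} [Fintype 𝒴] [Fintype ℛ]
    (T : ℝ) (hT : 0 < T)
    (γ : ℛ → 𝒴 → ℝ)
    (kbar : (𝒴 → ℝ) → ℛ → ℝ)
    (hk_cont : ContinuousOn kbar {c : 𝒴 → ℝ | ∀ y, 0 ≤ c y})
    (hk_nonneg : ∀ c : 𝒴 → ℝ, (∀ y, 0 ≤ c y) → ∀ r, 0 ≤ kbar c r)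
    (hk_bdd : ∃ K : ℝ, ∀ c : 𝒴 → ℝ, (∀ y, 0 ≤ c y) → ∀ r, kbar c r ≤ K)
    -- the approximating sequence of W^{1,1} pairs with their derivatives
    (cn : ℕ → ℝ → 𝒴 → ℝ) (wn : ℕ → ℝ → ℛ → ℝ)
    (dcn : ℕ → ℝ → 𝒴 → ℝ) (dwn : ℕ → ℝ → ℛ → ℝ)
    (hn : ∀ n : ℕ,
      IntegrableOn (dcn n) (Set.Ioo 0 T) ∧ IntegrableOn (dwn n) (Set.Ioo 0 T)
      ∧ (∀ t ∈ Set.Icc (0:ℝ) T, cn n t = cn n 0 + ∫ s in (0:ℝ)..t, dcn n s)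
      ∧ (∀ t ∈ Set.Icc (0:ℝ) T, wn n t = wn n 0 + ∫ s in (0:ℝ)..t, dwn n s)
      ∧ (∀ t ∈ Set.Icc (0:ℝ) T, (∀ y, 0 ≤ cn n t y) ∧ (∀ r, 0 ≤ wn n t r))
      ∧ (∀ᵐ t ∂(volume.restrict (Set.Ioo (0:ℝ) T)),
          (∀ r, 0 ≤ dwn n t r) ∧ dcn n t = fun y => ∑ r, dwn n t r * γ r y))
    -- the limit W^{1,1} pair with its derivative
    (c : ℝ → 𝒴 → ℝ) (w : ℝ → ℛ → ℝ) (dc : ℝ → 𝒴 → ℝ) (dw : ℝ → ℛ → ℝ)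
    (hlim : IntegrableOn dc (Set.Ioo 0 T) ∧ IntegrableOn dw (Set.Ioo 0 T)
      ∧ (∀ t ∈ Set.Icc (0:ℝ) T, c t = c 0 + ∫ s in (0:ℝ)..t, dc s)
      ∧ (∀ t ∈ Set.Icc (0:ℝ) T, w t = w 0 + ∫ s in (0:ℝ)..t, dw s)
      ∧ (∀ t ∈ Set.Icc (0:ℝ) T, (∀ y, 0 ≤ c t y) ∧ (∀ r, 0 ≤ w t r))
      ∧ (∀ᵐ t ∂(volume.restrict (Set.Ioo (0:ℝ) T)),
          (∀ r, 0 ≤ dw t r) ∧ dc t = fun y => ∑ r, dw t r * γ r y))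
    -- hybrid convergence: L¹ convergence of the paths ...
    (hL1 : Tendsto
      (fun n => ∫ t in Set.Ioo (0:ℝ) T, (‖cn n t - c t‖ + ‖wn n t - w t‖))
      atTop (𝓝 0))
    -- ... and vague convergence of the flux derivatives ...
    (hvague_w : ∀ φ : ℝ → ℛ → ℝ, Continuous φ → HasCompactSupport φ →
      tsupport φ ⊆ Set.Ioo 0 T →
      Tendsto (fun n => ∫ t in Set.Ioo (0:ℝ) T, ∑ r, φ t r * dwn n t r) atTop
        (𝓝 (∫ t in Set.Ioo (0:ℝ) T, ∑ r, φ t r * dw t r))) :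
    (∫⁻ t in Set.Ioo (0:ℝ) T, ∑ r, bes (dw t r) (kbar (c t) r))
      ≤ Filter.atTop.liminf
          (fun n => ∫⁻ t in Set.Ioo (0:ℝ) T, ∑ r, bes (dwn n t r) (kbar (cn n t) r)) := by
  obtain ⟨hdc, hdw, hc_eq, hw_eq, hcw, hdw_ae⟩ := hlim
  obtain ⟨K, hK⟩ := hk_bdd
  have hkK : ∀ e ∈ {c : 𝒴 → ℝ | ∀ y, 0 ≤ c y}, ∀ r, kbar e r ∈ Icc 0 K :=
    fun e he r => ⟨hk_nonneg e he r, hK e he r⟩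
  set μ := volume.restrict (Ioo (0:ℝ) T)
  have hae : ∀ {p : ℝ → Prop}, (∀ t ∈ Icc 0 T, p t) → ∀ᵐ t ∂μ, p t := fun h =>
    (ae_restrict_mem measurableSet_Ioo).mono fun t ht => h t (Ioo_subset_Icc_self ht)
  have hc := continuousOn_Icc_of_eq_add_integral hT.le hdc hc_eq
  have hcn n := continuousOn_Icc_of_eq_add_integral hT.le (hn n).1 (hn n).2.2.1
  have hkc : AEStronglyMeasurable (fun t => kbar (c t)) μ :=
    ((hk_cont.comp hc fun t ht => (hcw t ht).1).mono Ioo_subset_Icc_self).aestronglyMeasurable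
      measurableSet_Ioo
  have hkcn n : AEStronglyMeasurable (fun t => kbar (cn n t)) μ :=
    ((hk_cont.comp (hcn n) fun t ht => ((hn n).2.2.2.2.1 t ht).1).mono
      Ioo_subset_Icc_self).aestronglyMeasurable measurableSet_Ioo
  have hcn_c := tendstoInMeasure_of_tendsto_integral_norm_add_norm hcn hc
    (fun n => continuousOn_Icc_of_eq_add_integral hT.le (hn n).2.1 (hn n).2.2.2.1)
    (continuousOn_Icc_of_eq_add_integral hT.le hdw hw_eq) hL1
  refine lintegral_sum_bes_le_of_forall_continuous isOpen_Ioo (fun m => isCompact_Icc)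
    (fun m => Icc_subset_Ioo (by simp only [zero_add]; positivity) (sub_lt_self _ (by positivity)))
    ((ae_restrict_mem measurableSet_Ioo).mono fun t => eventually_mem_Icc_of_mem_Ioo) hdw
    (hdw_ae.mono fun t h => h.1) hkc (hae fun t ht => hkK _ (hcw t ht).1)
    fun φ hφ hφcs hφU => ?_
  obtain ⟨B, hB⟩ := hφcs.exists_bound_of_continuous hφ
  exact ofReal_integral_sum_besDual_le_liminf hk_cont hkK hcn_c
    (fun n => hae fun t ht => ((hn n).2.2.2.2.1 t ht).1) (hae fun t ht => (hcw t ht).1)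
    hkcn hkc (fun n => (hn n).2.1) (fun n => (hn n).2.2.2.2.2.mono fun t h => h.1) hdw
    hφ.aestronglyMeasurable (fun t r => (norm_le_pi_norm (φ t) r).trans (hB t))
    (hvague_w φ hφ hφcs hφU)

/-- for continuous bounded `k̄`, the rate functional `J` is sequentially
lower semicontinuous along hybrid convergence: if `W^{1,1}` pairs `(cₙ,wₙ)` (with
values in the nonnegative cones, `ẇₙ ≥ 0`, `ċₙ = Γẇₙ`) converge to `(c,w)` in the
hybrid sense, then `liminf J(cₙ,wₙ) ≥ J(c,w)`. -/
theorem stmt8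
    {𝒴 ℛ : Type*} [Fintype 𝒴] [Fintype ℛ]
    (T : ℝ) (hT : 0 < T)
    (γ : ℛ → 𝒴 → ℝ)
    (kbar : (𝒴 → ℝ) → ℛ → ℝ)
    (hk_cont : ContinuousOn kbar {c : 𝒴 → ℝ | ∀ y, 0 ≤ c y})
    (hk_nonneg : ∀ c : 𝒴 → ℝ, (∀ y, 0 ≤ c y) → ∀ r, 0 ≤ kbar c r)
    (hk_bdd : ∃ K : ℝ, ∀ c : 𝒴 → ℝ, (∀ y, 0 ≤ c y) → ∀ r, kbar c r ≤ K)
    -- the approximating sequence of W^{1,1} pairs with their derivatives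
    (cn : ℕ → ℝ → 𝒴 → ℝ) (wn : ℕ → ℝ → ℛ → ℝ)
    (dcn : ℕ → ℝ → 𝒴 → ℝ) (dwn : ℕ → ℝ → ℛ → ℝ)
    (hn : ∀ n : ℕ,
      IntegrableOn (dcn n) (Set.Ioo 0 T) ∧ IntegrableOn (dwn n) (Set.Ioo 0 T)
      ∧ (∀ t ∈ Set.Icc (0:ℝ) T, cn n t = cn n 0 + ∫ s in (0:ℝ)..t, dcn n s)
      ∧ (∀ t ∈ Set.Icc (0:ℝ) T, wn n t = wn n 0 + ∫ s in (0:ℝ)..t, dwn n s)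
      ∧ (∀ t ∈ Set.Icc (0:ℝ) T, (∀ y, 0 ≤ cn n t y) ∧ (∀ r, 0 ≤ wn n t r))
      ∧ (∀ᵐ t ∂(volume.restrict (Set.Ioo (0:ℝ) T)),
          (∀ r, 0 ≤ dwn n t r) ∧ dcn n t = fun y => ∑ r, dwn n t r * γ r y))
    -- the limit W^{1,1} pair with its derivative
    (c : ℝ → 𝒴 → ℝ) (w : ℝ → ℛ → ℝ) (dc : ℝ → 𝒴 → ℝ) (dw : ℝ → ℛ → ℝ)
    (hlim : IntegrableOn dc (Set.Ioo 0 T) ∧ IntegrableOn dw (Set.Ioo 0 T)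
      ∧ (∀ t ∈ Set.Icc (0:ℝ) T, c t = c 0 + ∫ s in (0:ℝ)..t, dc s)
      ∧ (∀ t ∈ Set.Icc (0:ℝ) T, w t = w 0 + ∫ s in (0:ℝ)..t, dw s)
      ∧ (∀ t ∈ Set.Icc (0:ℝ) T, (∀ y, 0 ≤ c t y) ∧ (∀ r, 0 ≤ w t r))
      ∧ (∀ᵐ t ∂(volume.restrict (Set.Ioo (0:ℝ) T)),
          (∀ r, 0 ≤ dw t r) ∧ dc t = fun y => ∑ r, dw t r * γ r y))
    -- hybrid convergence: L¹ convergence of the paths ...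
    (hL1 : Tendsto
      (fun n => ∫ t in Set.Ioo (0:ℝ) T, (‖cn n t - c t‖ + ‖wn n t - w t‖))
      atTop (𝓝 0))
    -- ... and vague convergence of the flux derivatives ...
    (hvague_w : ∀ φ : ℝ → ℛ → ℝ, Continuous φ → HasCompactSupport φ →
      tsupport φ ⊆ Set.Ioo 0 T →
      Tendsto (fun n => ∫ t in Set.Ioo (0:ℝ) T, ∑ r, φ t r * dwn n t r) atTop
        (𝓝 (∫ t in Set.Ioo (0:ℝ) T, ∑ r, φ t r * dw t r)))
    -- ... and of the concentration derivatives
    (hvague_c : ∀ ξ : ℝ → 𝒴 → ℝ, Continuous ξ → HasCompactSupport ξ →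
      tsupport ξ ⊆ Set.Ioo 0 T →
      Tendsto (fun n => ∫ t in Set.Ioo (0:ℝ) T, ∑ y, ξ t y * dcn n t y) atTop
        (𝓝 (∫ t in Set.Ioo (0:ℝ) T, ∑ y, ξ t y * dc t y))) :
    (∫⁻ t in Set.Ioo (0:ℝ) T, ∑ r, bes (dw t r) (kbar (c t) r))
      ≤ Filter.atTop.liminf
          (fun n => ∫⁻ t in Set.Ioo (0:ℝ) T, ∑ r, bes (dwn n t r) (kbar (cn n t) r)) :=
  stmt8_general T hT γ kbar hk_cont hk_nonneg hk_bdd cn wn dcn dwn hn c w dc dw hlim hL1 hvague_w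
end
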